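/- arXiv:2603.07491 — 8 statements merged into one kernel-verified Lean document; each statement's English description precedes it below -/
import Mathlib

section
/- Let A be a C*-algebra, let a be a positive element of A, and let f : [0, ∞) → [0, ∞) be a continuous function with f(0) = 0 and f(λ) > 0 for all λ ∈ (0, ‖a‖]. Then f(a), obtained by applying f to a via the continuous functional calculus, is Cuntz equivalent to a. -/
open Filter Topology

variable {A : Type*} [NonUnitalCStarAlgebra A] [PartialOrder A] [StarOrderedRing A]

/-- Cuntz subequivalence: `a ≲ b` iff there is a sequence `vₙ` with `‖vₙ* b vₙ - a‖ → 0`. -/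
def CuntzLE (a b : A) : Prop :=
  ∃ v : ℕ → A, Tendsto (fun n => ‖star (v n) * b * v n - a‖) atTop (𝓝 0)

/-- Cuntz equivalence: `a ∼ b` iff `a ≲ b` and `b ≲ a`. -/
def CuntzEquiv (a b : A) : Prop := CuntzLE a b ∧ CuntzLE b a

/-- The hereditary C*-subalgebra generated by `b`: the norm closure of `{b x b : x ∈ A}`. -/
def her (b : A) : Set A := closure {x : A | ∃ y : A, x = b * y * b}

/-- `(a - ε)₊`, i.e. the function `t ↦ max (t - ε) 0` applied to `a` via the
continuous functional calculus. -/
noncomputable def cut (a : A) (ε : ℝ) : A := cfcₙ (fun t : ℝ => max (t - ε) 0) a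

lemma cuntzLE_of_forall {a b : A}
    (h : ∀ ε : ℝ, 0 < ε → ∃ v : A, ‖star v * b * v - a‖ ≤ ε) : CuntzLE a b := by
  choose v hv using fun n : ℕ => h (1 / (n + 1)) (by positivity)
  exact ⟨v, squeeze_zero (fun n => norm_nonneg _) hv
    tendsto_one_div_add_atTop_nhds_zero_nat⟩

lemma cuntzLE_key {a : A} (ha : 0 ≤ a) {F G : ℝ → ℝ}
    (hF : ContinuousOn F (Set.Ici 0)) (hF0 : F 0 = 0)
    (hG : ContinuousOn G (Set.Ici 0)) (hG0 : G 0 = 0)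
    (h : ∀ ε : ℝ, 0 < ε → ∃ g : ℝ → ℝ, ContinuousOn g (Set.Ici 0) ∧ g 0 = 0 ∧
      ∀ t : ℝ, 0 ≤ t → t ≤ ‖a‖ → |g t * F t * g t - G t| ≤ ε) :
    CuntzLE (cfcₙ G a) (cfcₙ F a) := by
  have hsa : IsSelfAdjoint a := .of_nonneg ha
  have hsub : quasispectrum ℝ a ⊆ Set.Ici 0 :=
    fun x hx => quasispectrum_nonneg_of_nonneg a ha x hx
  have hub : ∀ x ∈ quasispectrum ℝ a, x ≤ ‖a‖ := by
    intro x hx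
    calc x ≤ |x| := le_abs_self x
    _ = ‖(id : ℝ → ℝ) x‖ := rfl
    _ ≤ ‖cfcₙ (id : ℝ → ℝ) a‖ := norm_apply_le_norm_cfcₙ _ a hx continuousOn_id rfl hsa
    _ = ‖a‖ := by rw [cfcₙ_id ℝ a]
  apply cuntzLE_of_forall
  intro ε hε
  obtain ⟨g, hg, hg0, hgb⟩ := h ε hε
  have hg' : ContinuousOn g (quasispectrum ℝ a) := hg.mono hsub
  have hF' : ContinuousOn F (quasispectrum ℝ a) := hF.mono hsub
  have hG' : ContinuousOn G (quasispectrum ℝ a) := hG.mono hsub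
  refine ⟨cfcₙ g a, ?_⟩
  have hstar : star (cfcₙ g a) = cfcₙ g a := by
    rw [← cfcₙ_star]
    simp only [star_trivial]
  have hmul1 : cfcₙ g a * cfcₙ F a = cfcₙ (fun t => g t * F t) a :=
    (cfcₙ_mul g F a hg' hg0 hF' hF0).symm
  have hmul2 : cfcₙ (fun t => g t * F t) a * cfcₙ g a
      = cfcₙ (fun t => g t * F t * g t) a :=
    (cfcₙ_mul _ g a (hg'.mul hF') (by simp [hg0]) hg' hg0).symm
  rw [hstar, hmul1, hmul2,
    ← cfcₙ_sub (fun t => g t * F t * g t) G a ((hg'.mul hF').mul hg') (by simp [hg0]) hG' hG0]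
  exact norm_cfcₙ_le fun x hx => by
    rw [Real.norm_eq_abs]; exact hgb x (hsub hx) (hub x hx)

theorem stmt_2 (a : A) (ha : 0 ≤ a) (f : ℝ → ℝ)
    (hf : ContinuousOn f (Set.Ici 0)) (hf0 : f 0 = 0)
    (hf_nonneg : ∀ t : ℝ, 0 ≤ t → 0 ≤ f t)
    (hf_pos : ∀ t : ℝ, 0 < t → t ≤ ‖a‖ → 0 < f t) :
    CuntzEquiv (cfcₙ f a) a := by
  have hsa : IsSelfAdjoint a := .of_nonneg ha
  have hid : cfcₙ (id : ℝ → ℝ) a = a := cfcₙ_id ℝ a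
  have hidc : ContinuousOn (id : ℝ → ℝ) (Set.Ici 0) := continuousOn_id
  constructor
  · -- f(a) ≲ a
    have := cuntzLE_key (F := (id : ℝ → ℝ)) (G := f) ha hidc rfl hf hf0 ?_
    · rwa [hid] at this
    intro ε hε
    -- maximum of f on [0, ‖a‖]
    obtain ⟨tM, htM, hmax⟩ := isCompact_Icc.exists_isMaxOn
      (Set.nonempty_Icc.mpr (norm_nonneg a)) (hf.mono Set.Icc_subset_Ici_self)
    set M : ℝ := f tM + 1 with hM
    have hM0 : 0 < M := by
      have := hf_nonneg tM htM.1
      simp only [hM]; linarith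
    have hMb : ∀ t : ℝ, 0 ≤ t → t ≤ ‖a‖ → f t ≤ M := by
      intro t ht ht'
      have := hmax ⟨ht, ht'⟩
      simp only [hM]; dsimp at this; linarith
    -- continuity of f at 0
    obtain ⟨δ, hδ0, hδ⟩ := Metric.continuousWithinAt_iff.mp
      (hf.continuousWithinAt Set.self_mem_Ici) ε hε
    set c : ℝ := ε * δ ^ 2 / M with hc
    have hc0 : 0 < c := by positivity
    refine ⟨fun t => Real.sqrt (f t * t / (t ^ 2 + c)), ?_, ?_, ?_⟩
    · exact Real.continuous_sqrt.comp_continuousOn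
        (((hf.mul continuousOn_id).div (Continuous.continuousOn (by continuity))
          (fun t _ => by positivity)))
    · simp [hf0]
    · intro t ht htn
      have hden : (0 : ℝ) < t ^ 2 + c := by positivity
      have hnum : 0 ≤ f t * t := mul_nonneg (hf_nonneg t ht) ht
      have hgg : Real.sqrt (f t * t / (t ^ 2 + c)) * Real.sqrt (f t * t / (t ^ 2 + c))
          = f t * t / (t ^ 2 + c) := Real.mul_self_sqrt (by positivity)
      have hkey : Real.sqrt (f t * t / (t ^ 2 + c)) * id t * Real.sqrt (f t * t / (t ^ 2 + c))
          - f t = -(f t * c / (t ^ 2 + c)) := by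
        have h' : Real.sqrt (f t * t / (t ^ 2 + c)) * id t * Real.sqrt (f t * t / (t ^ 2 + c))
            = (f t * t / (t ^ 2 + c)) * t := by
          simp only [id]
          rw [show Real.sqrt (f t * t / (t ^ 2 + c)) * t * Real.sqrt (f t * t / (t ^ 2 + c))
            = (Real.sqrt (f t * t / (t ^ 2 + c)) * Real.sqrt (f t * t / (t ^ 2 + c))) * t
            from by ring, hgg]
        rw [h']
        field_simp
        ring
      have habs : 0 ≤ f t * c / (t ^ 2 + c) :=
        div_nonneg (mul_nonneg (hf_nonneg t ht) hc0.le) hden.le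
      rw [hkey, abs_neg, abs_of_nonneg habs]
      rcases le_or_gt δ t with hδt | hδt
      · have h1 : f t * c ≤ M * c :=
          mul_le_mul_of_nonneg_right (hMb t ht htn) hc0.le
        have h2 : δ ^ 2 ≤ t ^ 2 + c := by nlinarith
        calc f t * c / (t ^ 2 + c) ≤ M * c / δ ^ 2 :=
              div_le_div₀ (by positivity) h1 (by positivity) h2
        _ = ε := by
          rw [hc]
          field_simp
      · have hft : f t ≤ ε := by
          have := hδ (Set.mem_Ici.mpr ht) (by rwa [Real.dist_eq, sub_zero, abs_of_nonneg ht])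
          rw [Real.dist_eq, hf0, sub_zero, abs_of_nonneg (hf_nonneg t ht)] at this
          exact this.le
        calc f t * c / (t ^ 2 + c) = f t * (c / (t ^ 2 + c)) := by ring
        _ ≤ f t * 1 := by
              apply mul_le_mul_of_nonneg_left _ (hf_nonneg t ht)
              rw [div_le_one hden]; nlinarith
        _ ≤ ε := by linarith
  · -- a ≲ f(a)
    have := cuntzLE_key (F := f) (G := (id : ℝ → ℝ)) ha hf hf0 hidc rfl ?_
    · rwa [hid] at this
    intro ε hε
    -- lower bound of f on [ε, ‖a‖]
    obtain ⟨m, hm0, hm⟩ : ∃ m : ℝ, 0 < m ∧ ∀ t ∈ Set.Icc ε ‖a‖, m ≤ f t := by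
      by_cases hle : ε ≤ ‖a‖
      · obtain ⟨t0, ht0, hmin⟩ := isCompact_Icc.exists_isMinOn ⟨ε, le_refl ε, hle⟩
          (hf.mono (fun t ht => le_trans hε.le ht.1))
        exact ⟨f t0, hf_pos t0 (lt_of_lt_of_le hε ht0.1) ht0.2, fun t ht => hmin ht⟩
      · exact ⟨1, one_pos, fun t ht => absurd (ht.1.trans ht.2) hle⟩
    set c : ℝ := ε * m / (‖a‖ + 1) with hc
    have hc0 : 0 < c := by positivity
    refine ⟨fun t => Real.sqrt (t / (f t + c)), ?_, ?_, ?_⟩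
    · exact Real.continuous_sqrt.comp_continuousOn
        ((continuousOn_id.div (hf.add continuousOn_const)
          (fun t ht => by have := hf_nonneg t ht; positivity)))
    · simp [hf0]
    · intro t ht htn
      have hft0 : 0 ≤ f t := hf_nonneg t ht
      have hden : (0 : ℝ) < f t + c := by positivity
      have hgg : Real.sqrt (t / (f t + c)) * Real.sqrt (t / (f t + c))
          = t / (f t + c) := Real.mul_self_sqrt (by positivity)
      have hkey : Real.sqrt (t / (f t + c)) * f t * Real.sqrt (t / (f t + c)) - id t
          = -(t * c / (f t + c)) := by
        have h' : Real.sqrt (t / (f t + c)) * f t * Real.sqrt (t / (f t + c))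
            = (t / (f t + c)) * f t := by
          rw [show Real.sqrt (t / (f t + c)) * f t * Real.sqrt (t / (f t + c))
            = (Real.sqrt (t / (f t + c)) * Real.sqrt (t / (f t + c))) * f t
            from by ring, hgg]
        rw [h']
        simp only [id]
        field_simp
        ring
      have habs : 0 ≤ t * c / (f t + c) :=
        div_nonneg (mul_nonneg ht hc0.le) hden.le
      rw [hkey, abs_neg, abs_of_nonneg habs]
      rcases le_or_gt ε t with hεt | hεt
      · have h1 : t * c ≤ ‖a‖ * c := mul_le_mul_of_nonneg_right htn hc0.le
        have h2 : m ≤ f t + c := le_add_of_le_of_nonneg (hm t ⟨hεt, htn⟩) hc0.le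
        calc t * c / (f t + c) ≤ ‖a‖ * c / m :=
              div_le_div₀ (by positivity) h1 hm0 h2
        _ = ε * ‖a‖ / (‖a‖ + 1) := by rw [hc]; field_simp
        _ ≤ ε := by
              rw [div_le_iff₀ (by positivity)]
              nlinarith [norm_nonneg a]
      · calc t * c / (f t + c) = t * (c / (f t + c)) := by ring
        _ ≤ t * 1 := by
              apply mul_le_mul_of_nonneg_left _ ht
              rw [div_le_one hden]; nlinarith
        _ ≤ ε := by linarith
end

section
/- Let A be a C*-algebra, let c ∈ A, and let α > 0. Then (c*c − α)₊ is Cuntz equivalent to (cc* − α)₊. -/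
open Filter Topology

local notation "σₙ" => quasispectrum

variable {A : Type*} [NonUnitalCStarAlgebra A] [PartialOrder A] [StarOrderedRing A]

lemma quasi_swap (c : A) : σₙ ℝ (c * star c) = σₙ ℝ (star c * c) := by
  have h1 : (0 : ℝ) ∈ spectrum ℝ (((c * star c : A)) : Unitization ℝ A) :=
    Unitization.zero_mem_spectrum_inr ℝ ℝ _
  have h2 : (0 : ℝ) ∈ spectrum ℝ (((star c * c : A)) : Unitization ℝ A) :=
    Unitization.zero_mem_spectrum_inr ℝ ℝ _
  rw [Unitization.quasispectrum_eq_spectrum_inr ℝ, Unitization.quasispectrum_eq_spectrum_inr ℝ]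
  rw [Unitization.inr_mul] at h1 h2 ⊢
  rw [Unitization.inr_mul]
  rw [← Set.diff_union_of_subset (Set.singleton_subset_iff.mpr h1),
    ← Set.diff_union_of_subset (Set.singleton_subset_iff.mpr h2),
    spectrum.nonzero_mul_comm]

open scoped ContinuousMapZero in
lemma mul_cfcₙ_comm (c : A) (f : ℝ → ℝ) (hf : Continuous f) (h0 : f 0 = 0) :
    c * cfcₙ f (star c * c) = cfcₙ f (c * star c) * c := by
  have ha : IsSelfAdjoint (star c * c) := IsSelfAdjoint.star_mul_self c
  have hb : IsSelfAdjoint (c * star c) := IsSelfAdjoint.mul_star_self c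
  have hs : σₙ ℝ (c * star c) = σₙ ℝ (star c * c) := quasi_swap c
  have h0a : ((0 : σₙ ℝ (star c * c)) : ℝ) = 0 := rfl
  have h0b : ((0 : σₙ ℝ (c * star c)) : ℝ) = 0 := rfl
  let e : C(σₙ ℝ (c * star c), σₙ ℝ (star c * c))₀ :=
    ⟨⟨fun x => ⟨x.1, hs ▸ x.2⟩, (continuous_subtype_val).subtype_mk _⟩, Subtype.ext rfl⟩
  let φ := cfcₙHom (R := ℝ) ha
  let ψ : C(σₙ ℝ (star c * c), ℝ)₀ →⋆ₙₐ[ℝ] A :=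
    (cfcₙHom (R := ℝ) hb).comp (ContinuousMapZero.nonUnitalStarAlgHom_precomp ℝ e)
  have hψcont : Continuous ψ :=
    (cfcₙHom_isClosedEmbedding hb).continuous.comp (ContinuousMapZero.continuous_comp_left e)
  have key : ∀ g : C(σₙ ℝ (star c * c), ℝ)₀, c * φ g = ψ g * c := by
    intro g
    induction g using ContinuousMapZero.induction_on_of_compact with
    | zero => simp [map_zero]
    | id =>
      have hφ : φ (.id (σₙ ℝ (star c * c))) = star c * c := cfcₙHom_id ha
      have hψ : ψ (.id (σₙ ℝ (star c * c))) = c * star c := by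
        have : (ContinuousMapZero.id (σₙ ℝ (star c * c))).comp e = ContinuousMapZero.id (σₙ ℝ (c * star c)) := by
          ext x; rfl
        show cfcₙHom hb ((ContinuousMapZero.id (σₙ ℝ (star c * c))).comp e) = c * star c
        rw [this]; exact cfcₙHom_id hb
      rw [hφ, hψ, mul_assoc]
    | star_id =>
      have hstar : star (ContinuousMapZero.id (σₙ ℝ (star c * c))) = ContinuousMapZero.id (σₙ ℝ (star c * c)) := by
        ext x; exact star_trivial _
      rw [hstar]
      have hφ : φ (.id (σₙ ℝ (star c * c))) = star c * c := cfcₙHom_id ha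
      have hψ : ψ (.id (σₙ ℝ (star c * c))) = c * star c := by
        have : (ContinuousMapZero.id (σₙ ℝ (star c * c))).comp e = ContinuousMapZero.id (σₙ ℝ (c * star c)) := by
          ext x; rfl
        show cfcₙHom hb ((ContinuousMapZero.id (σₙ ℝ (star c * c))).comp e) = c * star c
        rw [this]; exact cfcₙHom_id hb
      rw [hφ, hψ, mul_assoc]
    | add g₁ g₂ hg₁ hg₂ => simp only [map_add, mul_add, add_mul, hg₁, hg₂]
    | mul g₁ g₂ hg₁ hg₂ =>
      simp only [map_mul]
      rw [← mul_assoc, hg₁, mul_assoc, hg₂, ← mul_assoc]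
    | smul r g hg => simp only [map_smul, mul_smul_comm, smul_mul_assoc, hg]
    | frequently g hg =>
      have hcl : IsClosed {g : C(σₙ ℝ (star c * c), ℝ)₀ | c * φ g = ψ g * c} :=
        isClosed_eq ((continuous_mul_left c).comp (cfcₙHom_isClosedEmbedding ha).continuous)
          ((continuous_mul_right c).comp hψcont)
      have hmem : g ∈ closure {g : C(σₙ ℝ (star c * c), ℝ)₀ | c * φ g = ψ g * c} :=
        mem_closure_iff_frequently.mpr hg
      rw [hcl.closure_eq] at hmem
      exact hmem
  rw [cfcₙ_apply f (star c * c) hf.continuousOn h0 ha,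
    cfcₙ_apply f (c * star c) hf.continuousOn h0 hb]
  have h2 : cfcₙHom (R := ℝ) hb ⟨⟨_, hf.continuousOn.restrict⟩, h0⟩ =
      ψ ⟨⟨_, hf.continuousOn.restrict⟩, h0⟩ := by
    apply congrArg
    ext x; rfl
  rw [h2]
  exact key _

lemma cuntzLE_cut (c : A) (α : ℝ) (hα : 0 < α) :
    CuntzLE (cut (star c * c) α) (cut (c * star c) α) := by
  have ha : IsSelfAdjoint (star c * c) := IsSelfAdjoint.star_mul_self c
  set f : ℝ → ℝ := fun t => max (t - α) 0 with hfdef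
  have hf : Continuous f := by fun_prop
  have hf0 : f 0 = 0 := by simp [hfdef, hα.le]
  set g : ℝ → ℝ := fun t => t / Real.sqrt ((max t α) ^ 3) with hgdef
  have hmaxpos : ∀ t : ℝ, 0 < (max t α) ^ 3 := fun t =>
    pow_pos (lt_of_lt_of_le hα (le_max_right t α)) 3
  have hsqrt : Continuous fun t : ℝ => Real.sqrt ((max t α) ^ 3) :=
    Real.continuous_sqrt.comp ((continuous_id.max continuous_const).pow 3)
  have hg : Continuous g :=
    Continuous.div continuous_id hsqrt fun t => (Real.sqrt_pos.mpr (hmaxpos t)).ne'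
  have hg0 : g 0 = 0 := by simp [hgdef]
  set v : A := c * cfcₙ g (star c * c) with hvdef
  have hsa : IsSelfAdjoint (cfcₙ g (star c * c)) := cfcₙ_predicate g (star c * c)
  -- star c * cfcₙ f (c * star c) = cfcₙ f (star c * c) * star c
  have hcomm : star c * cfcₙ f (c * star c) = cfcₙ f (star c * c) * star c := by
    have := mul_cfcₙ_comm (star c) f hf hf0
    simpa using this
  have hkey : star v * cut (c * star c) α * v = cut (star c * c) α := by
    rw [hvdef]
    show star (c * cfcₙ g (star c * c)) * cfcₙ f (c * star c) * (c * cfcₙ g (star c * c)) =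
      cfcₙ f (star c * c)
    rw [star_mul, hsa.star_eq]
    calc cfcₙ g (star c * c) * star c * cfcₙ f (c * star c) * (c * cfcₙ g (star c * c))
        = cfcₙ g (star c * c) * (star c * cfcₙ f (c * star c)) * (c * cfcₙ g (star c * c)) := by
          noncomm_ring
      _ = cfcₙ g (star c * c) * (cfcₙ f (star c * c) * star c) * (c * cfcₙ g (star c * c)) := by
          rw [hcomm]
      _ = cfcₙ g (star c * c) * cfcₙ f (star c * c) * (star c * c) * cfcₙ g (star c * c) := by
          noncomm_ring
      _ = cfcₙ g (star c * c) * cfcₙ f (star c * c) * cfcₙ (fun t : ℝ => t) (star c * c) *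
            cfcₙ g (star c * c) := by rw [cfcₙ_id' ℝ (star c * c)]
      _ = cfcₙ (fun t : ℝ => g t * f t * t * g t) (star c * c) := by
          have hfc : ContinuousOn f (σₙ ℝ (star c * c)) := hf.continuousOn
          have hgc : ContinuousOn g (σₙ ℝ (star c * c)) := hg.continuousOn
          have hgfc : ContinuousOn (fun t : ℝ => g t * f t) (σₙ ℝ (star c * c)) :=
            (hg.mul hf).continuousOn
          have hgftc : ContinuousOn (fun t : ℝ => g t * f t * t) (σₙ ℝ (star c * c)) :=
            ((hg.mul hf).mul continuous_id).continuousOn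
          rw [cfcₙ_mul (fun t : ℝ => g t * f t * t) g _
              (hf := hgftc) (hf0 := by simp [hg0]) (hg := hgc) (hg0 := hg0),
            cfcₙ_mul (fun t : ℝ => g t * f t) (fun t : ℝ => t) _
              (hf := hgfc) (hf0 := by simp [hg0]) (hg := continuousOn_id) (hg0 := rfl),
            cfcₙ_mul g f _
              (hf := hgc) (hf0 := hg0) (hg := hfc) (hg0 := hf0)]
      _ = cfcₙ f (star c * c) := by
          apply cfcₙ_congr
          intro t _
          show g t * f t * t * g t = f t
          rcases le_or_gt t α with h | h
          · have : f t = 0 := by simp [hfdef, sub_nonpos.mpr h]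
            simp [this]
          · have hmax : max t α = t := max_eq_left h.le
            have ht : 0 < t := hα.trans h
            have hsq : Real.sqrt (t ^ 3) * Real.sqrt (t ^ 3) = t ^ 3 :=
              Real.mul_self_sqrt (by positivity)
            simp only [hgdef, hmax]
            field_simp
            rw [Real.sq_sqrt (by positivity)]
  exact ⟨fun _ => v, by simp [hkey]⟩

theorem stmt_5 (c : A) (α : ℝ) (hα : 0 < α) :
    CuntzEquiv (cut (star c * c) α) (cut (c * star c) α) := by
  refine ⟨cuntzLE_cut c α hα, ?_⟩
  have := cuntzLE_cut (star c) α hα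
  simpa using this
end

section
/- Let A be a C*-algebra and let a, b be positive elements of A with a Cuntz subequivalent to b, and let δ > 0. Then there exists v ∈ A such that v*v = (a − δ)₊ and vv* lies in the hereditary C*-subalgebra her(b), i.e. in the norm closure of {b x b : x ∈ A}. -/
open Filter Topology

section ScalarLemmas

/-- Auxiliary scalar function: `t / (max t c)^{3/2}`, a continuous cutoff version of
`t ↦ t^{-1/2}`, vanishing at `0`. -/
noncomputable def hfun (c t : ℝ) : ℝ := t / (max t c * Real.sqrt (max t c))

lemma hfun_cont {c : ℝ} (hc : 0 < c) : Continuous (hfun c) := by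
  apply Continuous.div continuous_id
  · fun_prop
  · intro t
    have h1 : 0 < max t c := lt_max_of_lt_right hc
    positivity

lemma hfun_zero (c : ℝ) : hfun c 0 = 0 := by simp [hfun]

lemma hfun_nonneg {c t : ℝ} (hc : 0 < c) (ht : 0 ≤ t) : 0 ≤ hfun c t := by
  have h1 : 0 < max t c := lt_max_of_lt_right hc
  have := Real.sqrt_pos.mpr h1
  unfold hfun; positivity

lemma hfun_mul_self_le {c t : ℝ} (hc : 0 < c) (ht : 0 ≤ t) :
    t * hfun c t ≤ Real.sqrt t := by
  have h1 : 0 < max t c := lt_max_of_lt_right hc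
  have hs : 0 < Real.sqrt (max t c) := Real.sqrt_pos.mpr h1
  have hsq : Real.sqrt (max t c) ^ 2 = max t c := Real.sq_sqrt h1.le
  have hts : Real.sqrt t ^ 2 = t := Real.sq_sqrt ht
  have hle : Real.sqrt t ≤ Real.sqrt (max t c) := Real.sqrt_le_sqrt (le_max_left t c)
  have htnn : 0 ≤ Real.sqrt t := Real.sqrt_nonneg t
  rw [hfun, mul_div_assoc']
  rw [div_le_iff₀ (by positivity)]
  have h2 : t * Real.sqrt t ≤ max t c * Real.sqrt (max t c) :=
    mul_le_mul (le_max_left t c) hle htnn h1.le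
  nlinarith [mul_le_mul_of_nonneg_left h2 htnn]

lemma hfun_eq_of_le {c c' t : ℝ} (hct : c ≤ t) (hc't : c' ≤ t) :
    hfun c t = hfun c' t := by
  rw [hfun, hfun, max_eq_left hct, max_eq_left hc't]

lemma phi_nonneg {c t : ℝ} (hc : 0 < c) (ht : 0 ≤ t) :
    0 ≤ hfun c t * t * hfun c t := by
  have := hfun_nonneg hc ht; positivity

lemma phi_le_one {c t : ℝ} (hc : 0 < c) (ht : 0 ≤ t) :
    hfun c t * t * hfun c t ≤ 1 := by
  have h1 : 0 < max t c := lt_max_of_lt_right hc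
  have hs : 0 < Real.sqrt (max t c) := Real.sqrt_pos.mpr h1
  have hsq : Real.sqrt (max t c) * Real.sqrt (max t c) = max t c :=
    Real.mul_self_sqrt h1.le
  have hu : hfun c t * (max t c * Real.sqrt (max t c)) = t := by
    rw [hfun]; field_simp
  have hunn : 0 ≤ hfun c t := hfun_nonneg hc ht
  have htm : t ≤ max t c := le_max_left t c
  have hus : hfun c t * Real.sqrt (max t c) ≤ 1 := by
    rw [hfun, div_mul_eq_mul_div, div_le_one (by positivity)]
    nlinarith [mul_le_mul_of_nonneg_right htm hs.le]
  nlinarith [mul_le_mul hus hus (by positivity) zero_le_one,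
    mul_le_mul_of_nonneg_left htm (mul_nonneg hunn hunn), hsq]

lemma phi_eq_one {c t : ℝ} (hc : 0 < c) (hct : c ≤ t) :
    hfun c t * t * hfun c t = 1 := by
  have ht : 0 < t := hc.trans_le hct
  have hs : 0 < Real.sqrt t := Real.sqrt_pos.mpr ht
  have hsq : Real.sqrt t * Real.sqrt t = t := Real.mul_self_sqrt ht.le
  rw [hfun, max_eq_left hct]
  field_simp
  nlinarith

lemma mul_one_sub_phi_le {c t : ℝ} (hc : 0 < c) (ht : 0 ≤ t) :
    t * (1 - hfun c t * t * hfun c t) ≤ c := by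
  rcases le_or_gt t c with h | h
  · nlinarith [phi_nonneg hc ht]
  · rw [phi_eq_one hc h.le]; simpa using hc.le

lemma tmul_diff_sq_le {c c' t : ℝ} (hc : 0 < c) (hc' : 0 < c') (hcc : c' ≤ c) (ht : 0 ≤ t) :
    (t * (hfun c t - hfun c' t))^2 ≤ 4 * c := by
  rcases le_or_gt c t with h | h
  · rw [hfun_eq_of_le h (hcc.trans h)]
    simpa using by positivity
  · have h1 := hfun_mul_self_le hc ht
    have h2 := hfun_mul_self_le hc' ht
    have h3 := hfun_nonneg hc ht
    have h4 := hfun_nonneg hc' ht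
    have h5 : Real.sqrt t ≤ Real.sqrt c := Real.sqrt_le_sqrt h.le
    have h6 : Real.sqrt t * Real.sqrt t = t := Real.mul_self_sqrt ht
    have h7 : 0 ≤ Real.sqrt t := Real.sqrt_nonneg t
    have h8 : 0 ≤ Real.sqrt c := Real.sqrt_nonneg c
    have h9 : Real.sqrt c * Real.sqrt c = c := Real.mul_self_sqrt hc.le
    have e1 : t * hfun c t ≤ Real.sqrt c := h1.trans h5
    have e2 : t * hfun c' t ≤ Real.sqrt c := h2.trans h5
    have f1 : 0 ≤ t * hfun c t := by positivity
    have f2 : 0 ≤ t * hfun c' t := by positivity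
    have : |t * (hfun c t - hfun c' t)| ≤ 2 * Real.sqrt c := by
      rw [abs_le]; constructor <;> nlinarith
    nlinarith [abs_nonneg (t * (hfun c t - hfun c' t)), sq_abs (t * (hfun c t - hfun c' t))]

lemma tmul_diff_sq_le' {c c' t : ℝ} (hc : 0 < c) (hc' : 0 < c') (ht : 0 ≤ t) :
    (t * (hfun c t - hfun c' t))^2 ≤ 4 * max c c' := by
  rcases le_total c' c with h | h
  · calc (t * (hfun c t - hfun c' t))^2 ≤ 4 * c := tmul_diff_sq_le hc hc' h ht
      _ ≤ 4 * max c c' := by nlinarith [le_max_left c c']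
  · calc (t * (hfun c t - hfun c' t))^2 = (t * (hfun c' t - hfun c t))^2 := by ring
      _ ≤ 4 * c' := tmul_diff_sq_le hc' hc h ht
      _ ≤ 4 * max c c' := by nlinarith [le_max_right c c']

lemma tmul_sub_sqrt_le {c t : ℝ} (hc : 0 < c) (ht : 0 ≤ t) :
    |t * hfun c t - Real.sqrt t| ≤ 2 * Real.sqrt c := by
  rcases le_or_gt c t with h | h
  · have htp : 0 < t := hc.trans_le h
    have hs : 0 < Real.sqrt t := Real.sqrt_pos.mpr htp
    have hsq : Real.sqrt t * Real.sqrt t = t := Real.mul_self_sqrt htp.le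
    have : t * hfun c t = Real.sqrt t := by
      rw [hfun, max_eq_left h]; field_simp; nlinarith
    rw [this]
    simpa using by positivity
  · have h1 := hfun_mul_self_le hc ht
    have h3 := hfun_nonneg hc ht
    have h5 : Real.sqrt t ≤ Real.sqrt c := Real.sqrt_le_sqrt h.le
    have h7 : 0 ≤ Real.sqrt t := Real.sqrt_nonneg t
    have h8 : 0 ≤ Real.sqrt c := Real.sqrt_nonneg c
    have f1 : 0 ≤ t * hfun c t := by positivity
    rw [abs_le]; constructor <;> nlinarith

lemma scalar_step1 {δ : ℝ} (t : ℝ) :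
    δ * max (t - δ) 0 ≤
      Real.sqrt (max (t - δ) 0) * t * Real.sqrt (max (t - δ) 0) := by
  have hm : 0 ≤ max (t - δ) 0 := le_max_right _ _
  have hsq : Real.sqrt (max (t - δ) 0) * Real.sqrt (max (t - δ) 0) = max (t - δ) 0 :=
    Real.mul_self_sqrt hm
  rcases le_or_gt t δ with h | h
  · rw [max_eq_right (by linarith)]
    simp
  · have : Real.sqrt (max (t-δ) 0) * t * Real.sqrt (max (t-δ) 0) = t * max (t-δ) 0 := by
      linear_combination t * hsq
    rw [this]
    nlinarith [mul_nonneg (by linarith : (0:ℝ) ≤ t - δ) hm]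

/-- The sequence of cutoff parameters `1/(n+1)`. -/
noncomputable def cseq (n : ℕ) : ℝ := ((n : ℝ) + 1)⁻¹

lemma cseq_pos (n : ℕ) : 0 < cseq n := by unfold cseq; positivity

lemma cseq_antitone {n m : ℕ} (h : n ≤ m) : cseq m ≤ cseq n := by
  apply inv_anti₀ (by positivity)
  have : (n : ℝ) ≤ m := Nat.cast_le.mpr h
  linarith

lemma cseq_tendsto : Tendsto cseq atTop (𝓝 0) := by
  have := tendsto_one_div_add_atTop_nhds_zero_nat (𝕜 := ℝ)
  simp only [one_div] at this; exact this

end ScalarLemmas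

section KeyLemmas

/-- Key norm estimate in a unital C*-algebra: if `E = ρ²` with `ρ` self-adjoint and
`E ≤ γ⁻¹ • b`, then `‖ρ * g(b) * ρ‖ ≤ γ⁻¹ * C` provided `0 ≤ g` and `x * g x ≤ C`
on the spectrum of `b`. -/
lemma key_norm_est {B : Type*} [CStarAlgebra B] [PartialOrder B] [StarOrderedRing B]
    (ρ E b : B) (hρ : IsSelfAdjoint ρ) (hE : E = ρ * ρ)
    (γ : ℝ) (hγ : 0 < γ) (hEb : E ≤ γ⁻¹ • b) (hbsa : IsSelfAdjoint b)
    (g : ℝ → ℝ) (hg : Continuous g)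
    (hg0 : ∀ x ∈ spectrum ℝ b, 0 ≤ g x)
    (C : ℝ) (hC : 0 ≤ C) (hgC : ∀ x ∈ spectrum ℝ b, x * g x ≤ C)
    (hsp : ∀ x ∈ spectrum ℝ b, 0 ≤ x) :
    ‖ρ * cfc g b * ρ‖ ≤ γ⁻¹ * C := by
  set S := cfc (fun x => Real.sqrt (g x)) b with hSdef
  have hScont : ContinuousOn (fun x => Real.sqrt (g x)) (spectrum ℝ b) :=
    (Real.continuous_sqrt.comp hg).continuousOn
  have hS : IsSelfAdjoint S := cfc_predicate _ b
  have hgb : cfc g b = S * S := by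
    rw [hSdef, ← cfc_mul _ _ b hScont hScont]
    exact cfc_congr fun x hx => (Real.mul_self_sqrt (hg0 x hx)).symm
  set z := S * ρ with hzdef
  have h1 : ρ * cfc g b * ρ = star z * z := by
    rw [hgb, hzdef, star_mul, hS.star_eq, hρ.star_eq]
    simp [mul_assoc]
  have h2 : z * star z = S * E * S := by
    rw [hzdef, star_mul, hS.star_eq, hρ.star_eq, hE]
    simp [mul_assoc]
  have h3 : S * E * S ≤ γ⁻¹ • (S * b * S) := by
    have h := star_left_conjugate_le_conjugate hEb S
    rw [hS.star_eq] at h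
    calc S * E * S ≤ S * (γ⁻¹ • b) * S := h
      _ = γ⁻¹ • (S * b * S) := by rw [mul_smul_comm, smul_mul_assoc]
  have h4 : 0 ≤ S * E * S := by
    have : (0 : B) ≤ E := hE ▸ (by simpa [hρ.star_eq] using star_mul_self_nonneg ρ)
    simpa [hS.star_eq] using star_left_conjugate_nonneg this S
  have h6 : cfc (fun x => Real.sqrt (g x) * x * Real.sqrt (g x)) b = S * b * S := by
    rw [cfc_mul (fun x => Real.sqrt (g x) * x) _ b (hScont.mul (continuousOn_id' _)) hScont,
      cfc_mul _ _ b hScont (continuousOn_id' _), cfc_id' ℝ b hbsa, hSdef]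
  have h7 : ‖S * b * S‖ ≤ C := by
    rw [← h6]
    refine norm_cfc_le hC fun x hx => ?_
    have hx0 := hsp x hx
    have hgx := hg0 x hx
    have : Real.sqrt (g x) * x * Real.sqrt (g x) = x * g x := by
      rw [mul_comm (Real.sqrt (g x)) x, mul_assoc, Real.mul_self_sqrt hgx]
    rw [this, Real.norm_eq_abs, abs_of_nonneg (by positivity)]
    exact hgC x hx
  calc ‖ρ * cfc g b * ρ‖ = ‖star z * z‖ := by rw [h1]
    _ = ‖z‖ * ‖z‖ := CStarRing.norm_star_mul_self
    _ = ‖z * star z‖ := CStarRing.norm_self_mul_star.symm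
    _ = ‖S * E * S‖ := by rw [h2]
    _ ≤ ‖γ⁻¹ • (S * b * S)‖ := CStarAlgebra.norm_le_norm_of_nonneg_of_le h4 h3
    _ = γ⁻¹ * ‖S * b * S‖ := by rw [norm_smul, Real.norm_eq_abs, abs_of_pos (by positivity)]
    _ ≤ γ⁻¹ * C := mul_le_mul_of_nonneg_left h7 (by positivity)

variable {A : Type*} [NonUnitalCStarAlgebra A] [PartialOrder A] [StarOrderedRing A]

/-- Nonunital version of the key norm estimate, via the unitization. -/
lemma key_est (r e Bq X : A) (hr : IsSelfAdjoint r) (he : e = r * r)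
    (γ : ℝ) (hγ : 0 < γ) (heB : e ≤ γ⁻¹ • Bq) (hB : 0 ≤ Bq)
    (g : ℝ → ℝ) (hg : Continuous g)
    (hg0 : ∀ x : ℝ, 0 ≤ x → 0 ≤ g x) (C : ℝ) (hC : 0 ≤ C)
    (hgC : ∀ x : ℝ, 0 ≤ x → x * g x ≤ C)
    (hX : (X : Unitization ℂ A) =
      (r : Unitization ℂ A) * cfc g (Bq : Unitization ℂ A) * (r : Unitization ℂ A)) :
    ‖X‖ ≤ γ⁻¹ * C := by
  have hBnn : (0 : Unitization ℂ A) ≤ (Bq : Unitization ℂ A) :=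
    Unitization.inr_nonneg_iff.mpr hB
  have hsp : ∀ x ∈ spectrum ℝ (Bq : Unitization ℂ A), 0 ≤ x :=
    fun x hx => spectrum_nonneg_of_nonneg hBnn hx
  have hesa : IsSelfAdjoint e := by
    rw [he]; rw [IsSelfAdjoint, star_mul, hr.star_eq]
  have hsmulsa : IsSelfAdjoint (γ⁻¹ • Bq) := by
    rw [IsSelfAdjoint, star_smul, star_trivial, (IsSelfAdjoint.of_nonneg hB).star_eq]
  have hnorm : ‖X‖ = ‖(X : Unitization ℂ A)‖ := (Unitization.norm_inr ..).symm
  rw [hnorm, hX]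
  refine key_norm_est _ ((e : A) : Unitization ℂ A) _ (hr.inr ℂ) ?_ γ hγ ?_
    ((IsSelfAdjoint.of_nonneg hB).inr ℂ) g hg (fun x hx => hg0 x (hsp x hx)) C hC
    (fun x hx => hgC x (hsp x hx)) hsp
  · rw [he, Unitization.inr_mul]
  · rw [← Unitization.inr_smul]
    exact (Unitization.inr_le_iff _ _ hesa hsmulsa).mpr heB

end KeyLemmas

variable {A : Type*} [NonUnitalCStarAlgebra A] [PartialOrder A] [StarOrderedRing A]

lemma sqrt_conj_mem_her (b : A) (hb : 0 ≤ b) (cc : A) :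
    cfcₙ (fun t : ℝ => Real.sqrt (max t 0)) b * cc *
      cfcₙ (fun t : ℝ => Real.sqrt (max t 0)) b ∈ her b := by
  have hbsa : IsSelfAdjoint b := .of_nonneg hb
  set sq : ℝ → ℝ := fun t => Real.sqrt (max t 0) with hsqdef
  have hsqcont : Continuous sq := Real.continuous_sqrt.comp (continuous_id.max continuous_const)
  have hsq0 : sq 0 = 0 := by simp [hsqdef]
  set G : ℕ → A := fun n => cfcₙ (hfun (cseq n)) b with hGdef
  set T : ℕ → A := fun n => cfcₙ (fun t => t * hfun (cseq n) t) b with hTdef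
  have hTn : ∀ n, T n = b * G n := by
    intro n
    rw [hTdef, hGdef]
    simp only
    rw [cfcₙ_mul _ _ b (continuousOn_id' _) rfl
      ((hfun_cont (cseq_pos n)).continuousOn) (hfun_zero _), cfcₙ_id' ℝ b hbsa]
  have hTn' : ∀ n, T n = G n * b := by
    intro n
    rw [hTdef, hGdef]
    simp only
    have : (fun t : ℝ => t * hfun (cseq n) t) = fun t => hfun (cseq n) t * t := by
      funext t; ring
    rw [this, cfcₙ_mul _ _ b ((hfun_cont (cseq_pos n)).continuousOn) (hfun_zero _)
      (continuousOn_id' _) rfl, cfcₙ_id' ℝ b hbsa]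
  have hmem : ∀ n, T n * cc * T n ∈ {x : A | ∃ y : A, x = b * y * b} := by
    intro n
    refine ⟨G n * cc * G n, ?_⟩
    nth_rw 2 [hTn' n]
    rw [hTn n]
    simp [mul_assoc]
  have hdiff : ∀ n, ‖T n - cfcₙ sq b‖ ≤ 2 * Real.sqrt (cseq n) := by
    intro n
    rw [hTdef]
    simp only
    rw [← cfcₙ_sub (fun t => t * hfun (cseq n) t) _ b
      ((continuous_id'.mul (hfun_cont (cseq_pos n))).continuousOn)
      (by simp [hfun_zero]) (hsqcont.continuousOn) hsq0]
    refine norm_cfcₙ_le fun x hx => ?_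
    have hx0 : 0 ≤ x := quasispectrum_nonneg_of_nonneg b hb x hx
    rw [Real.norm_eq_abs]
    have : sq x = Real.sqrt x := by rw [hsqdef]; simp [max_eq_left hx0]
    rw [this]
    exact tmul_sub_sqrt_le (cseq_pos n) hx0
  have htend : Tendsto T atTop (𝓝 (cfcₙ sq b)) := by
    rw [tendsto_iff_dist_tendsto_zero]
    refine squeeze_zero (fun n => dist_nonneg)
      (fun n => by simpa [dist_eq_norm] using hdiff n) ?_
    have h2 : Tendsto (fun n => Real.sqrt (cseq n)) atTop (𝓝 0) := by
      have := (Real.continuous_sqrt.tendsto' 0 0 (by simp)).comp cseq_tendsto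
      exact this
    simpa using h2.const_mul 2
  have : Tendsto (fun n => T n * cc * T n) atTop
      (𝓝 (cfcₙ sq b * cc * cfcₙ sq b)) :=
    (htend.mul tendsto_const_nhds).mul htend
  exact mem_closure_of_tendsto this (Eventually.of_forall hmem)

theorem stmt_7 (a b : A) (ha : 0 ≤ a) (hb : 0 ≤ b) (h : CuntzLE a b)
    (δ : ℝ) (hδ : 0 < δ) :
    ∃ v : A, star v * v = cut a δ ∧ v * star v ∈ her b := by
  obtain ⟨vs, hv⟩ := h
  obtain ⟨N, hN⟩ := (hv.eventually (gt_mem_nhds hδ)).exists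
  set w := vs N with hw
  set y := star w * b * w with hy
  have hynn : 0 ≤ y := star_left_conjugate_nonneg hb w
  have hysa : IsSelfAdjoint y := .of_nonneg hynn
  have hasa : IsSelfAdjoint a := .of_nonneg ha
  have hεδ : ‖a - y‖ < δ := by rw [norm_sub_rev]; exact hN
  set γ := δ - ‖a - y‖ with hγdef
  have hγ : 0 < γ := sub_pos.mpr hεδ
  -- functional calculus elements
  set fmax : ℝ → ℝ := fun t => max (t - δ) 0 with hfmax
  have hfmaxc : Continuous fmax := (continuous_id.sub continuous_const).max continuous_const
  have hfmax0 : fmax 0 = 0 := by rw [hfmax]; simp; linarith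
  set g0 : ℝ → ℝ := fun t => Real.sqrt (fmax t) with hg0
  have hg0c : Continuous g0 := Real.continuous_sqrt.comp hfmaxc
  have hg00 : g0 0 = 0 := by rw [hg0]; simp only [hfmax0, Real.sqrt_zero]
  set r := cfcₙ g0 a with hrdef
  have hrsa : IsSelfAdjoint r := cfcₙ_predicate _ a
  set e := cut a δ with hedef
  have hecut : e = cfcₙ fmax a := by rw [hedef, cut, hfmax]
  have he : e = r * r := by
    rw [hecut, hrdef, ← cfcₙ_mul _ _ a hg0c.continuousOn hg00 hg0c.continuousOn hg00]
    exact cfcₙ_congr fun x _ => (Real.mul_self_sqrt (le_max_right _ _)).symm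
  set B := r * y * r with hBdef
  have hBnn : 0 ≤ B := by
    rw [hBdef]; simpa [hrsa.star_eq] using star_left_conjugate_nonneg hynn r
  have hBsa : IsSelfAdjoint B := .of_nonneg hBnn
  -- Step A : γ • e ≤ B, hence e ≤ γ⁻¹ • B
  have hrar : cfcₙ (fun t => g0 t * t * g0 t) a = r * a * r := by
    rw [cfcₙ_mul (fun t => g0 t * t) _ a ((hg0c.mul continuous_id').continuousOn) (by simp [hg00])
        hg0c.continuousOn hg00,
      cfcₙ_mul _ _ a hg0c.continuousOn hg00 (continuousOn_id' _) rfl,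
      cfcₙ_id' ℝ a hasa, hrdef]
  have hsm : cfcₙ (fun t => δ * fmax t) a = δ • e := by
    rw [hecut]; exact cfcₙ_const_mul δ fmax a hfmaxc.continuousOn hfmax0
  have hstep1 : δ • e ≤ r * a * r := by
    rw [← hsm, ← hrar]
    refine cfcₙ_mono (fun x _ => ?_) ?_ ?_ ?_ ?_
    · rw [hg0, hfmax]; exact scalar_step1 x
    · exact (continuous_const.mul hfmaxc).continuousOn
    · exact ((hg0c.mul continuous_id').mul hg0c).continuousOn
    · simp [hfmax0]
    · simp [hg00]
  have hstep2 : r * (a - y) * r ≤ ‖a - y‖ • e := by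
    have h2 := CStarAlgebra.star_left_conjugate_le_norm_smul (a := r) (b := a - y) (hasa.sub hysa)
    rwa [hrsa.star_eq, ← he] at h2
  have hγe : γ • e ≤ B := by
    have hexp : B = r * a * r - r * (a - y) * r := by rw [hBdef]; noncomm_ring
    rw [hexp, hγdef, sub_smul]
    exact sub_le_sub hstep1 hstep2
  have heB : e ≤ γ⁻¹ • B := by
    have h3 := smul_le_smul_of_nonneg_left hγe (inv_nonneg.mpr hγ.le)
    rwa [smul_smul, inv_mul_cancel₀ hγ.ne', one_smul] at h3
  -- the approximating sequence
  set H : ℕ → A := fun n => cfcₙ (hfun (cseq n)) B with hHdef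
  have hHsa : ∀ n, IsSelfAdjoint (H n) := fun n => cfcₙ_predicate _ B
  set d : ℕ → A := fun n => r * H n * r with hddef
  have hdsa : ∀ n, IsSelfAdjoint (d n) := by
    intro n
    rw [hddef]
    simp only
    rw [IsSelfAdjoint, star_mul, star_mul, hrsa.star_eq, (hHsa n).star_eq, mul_assoc]
  have hHBH : ∀ n, cfcₙ (fun t => hfun (cseq n) t * t * hfun (cseq n) t) B
      = H n * B * H n := by
    intro n
    rw [cfcₙ_mul (fun t => hfun (cseq n) t * t) _ B (((hfun_cont (cseq_pos n)).mul continuous_id').continuousOn)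
        (by simp [hfun_zero]) ((hfun_cont (cseq_pos n)).continuousOn) (hfun_zero _),
      cfcₙ_mul _ _ B ((hfun_cont (cseq_pos n)).continuousOn) (hfun_zero _)
        (continuousOn_id' _) rfl, cfcₙ_id' ℝ B hBsa, hHdef]
  have hdyd : ∀ n, d n * y * d n =
      r * cfcₙ (fun t => hfun (cseq n) t * t * hfun (cseq n) t) B * r := by
    intro n
    rw [hHBH n, hddef, hBdef]
    simp only
    simp [mul_assoc]
  -- estimate : ‖e - dₙ y dₙ‖ ≤ γ⁻¹ * cseq n
  have hEest : ∀ n, ‖e - d n * y * d n‖ ≤ γ⁻¹ * cseq n := by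
    intro n
    have hφc : Continuous (fun t => hfun (cseq n) t * t * hfun (cseq n) t) :=
      ((hfun_cont (cseq_pos n)).mul continuous_id').mul (hfun_cont (cseq_pos n))
    have hφ0 : (fun t => hfun (cseq n) t * t * hfun (cseq n) t) 0 = 0 := by
      simp [hfun_zero]
    refine key_est r e B _ hrsa he γ hγ heB hBnn
      (fun t => 1 - hfun (cseq n) t * t * hfun (cseq n) t)
      (continuous_const.sub hφc)
      (fun x hx => sub_nonneg.mpr (phi_le_one (cseq_pos n) hx))
      (cseq n) (cseq_pos n).le
      (fun x hx => mul_one_sub_phi_le (cseq_pos n) hx) ?_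
    have hcfc : ((cfcₙ (fun t => hfun (cseq n) t * t * hfun (cseq n) t) B : A)
        : Unitization ℂ A)
        = cfc (fun t => hfun (cseq n) t * t * hfun (cseq n) t) (B : Unitization ℂ A) :=
      Unitization.real_cfcₙ_eq_cfc_inr B _ hφ0
    have hBsa' : IsSelfAdjoint (B : Unitization ℂ A) := hBsa.inr ℂ
    rw [hdyd n, Unitization.inr_sub, Unitization.inr_mul, Unitization.inr_mul, hcfc,
      cfc_sub _ _ (B : Unitization ℂ A) continuousOn_const hφc.continuousOn,
      cfc_const (1 : ℝ) (B : Unitization ℂ A) hBsa', map_one]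
    have heinr : ((e : A) : Unitization ℂ A)
        = (r : Unitization ℂ A) * (r : Unitization ℂ A) := by
      rw [he, Unitization.inr_mul]
    rw [heinr]
    noncomm_ring
  -- Cauchy estimate
  have hdist : ∀ n m : ℕ,
      ‖d n - d m‖ ≤ 2 * γ⁻¹ * Real.sqrt (max (cseq n) (cseq m)) := by
    intro n m
    set Δf : ℝ → ℝ := fun t => hfun (cseq n) t - hfun (cseq m) t with hΔdef
    have hΔc : Continuous Δf := (hfun_cont (cseq_pos n)).sub (hfun_cont (cseq_pos m))
    have hΔ0 : Δf 0 = 0 := by rw [hΔdef]; simp [hfun_zero]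
    have hHΔ : H n - H m = cfcₙ Δf B := by
      rw [hHdef]
      simp only
      rw [hΔdef, cfcₙ_sub _ _ B ((hfun_cont (cseq_pos n)).continuousOn) (hfun_zero _)
        ((hfun_cont (cseq_pos m)).continuousOn) (hfun_zero _)]
    have hΔsa : IsSelfAdjoint (cfcₙ Δf B) := cfcₙ_predicate _ B
    set x := d n - d m with hxdef
    have hx : x = r * cfcₙ Δf B * r := by
      rw [hxdef, ← hHΔ, hddef]
      simp only
      noncomm_ring
    have hxsa : IsSelfAdjoint x := (hdsa n).sub (hdsa m)
    set cmax := max (cseq n) (cseq m) with hcmax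
    have hcm : 0 < cmax := lt_max_of_lt_left (cseq_pos n)
    have hq : cfcₙ Δf B * e * cfcₙ Δf B ≤ γ⁻¹ • (cfcₙ Δf B * B * cfcₙ Δf B) := by
      have h4 := star_left_conjugate_le_conjugate heB (cfcₙ Δf B)
      rw [hΔsa.star_eq] at h4
      calc cfcₙ Δf B * e * cfcₙ Δf B ≤ cfcₙ Δf B * (γ⁻¹ • B) * cfcₙ Δf B := h4
        _ = γ⁻¹ • (cfcₙ Δf B * B * cfcₙ Δf B) := by rw [mul_smul_comm, smul_mul_assoc]
    have hxx : x * x = r * (cfcₙ Δf B * e * cfcₙ Δf B) * r := by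
      rw [hx, he]
      simp [mul_assoc]
    have hxx_le : x * x ≤ γ⁻¹ • (r * (cfcₙ Δf B * B * cfcₙ Δf B) * r) := by
      rw [hxx]
      have h5 := star_left_conjugate_le_conjugate hq r
      rw [hrsa.star_eq] at h5
      calc r * (cfcₙ Δf B * e * cfcₙ Δf B) * r
          ≤ r * (γ⁻¹ • (cfcₙ Δf B * B * cfcₙ Δf B)) * r := h5
        _ = γ⁻¹ • (r * (cfcₙ Δf B * B * cfcₙ Δf B) * r) := by
            rw [mul_smul_comm, smul_mul_assoc]
    have hxxpos : 0 ≤ x * x := by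
      have h6 := star_mul_self_nonneg x
      rwa [hxsa.star_eq] at h6
    have hBmid : cfcₙ Δf B * B * cfcₙ Δf B = cfcₙ (fun t => Δf t * t * Δf t) B := by
      rw [cfcₙ_mul (fun t => Δf t * t) _ B ((hΔc.mul continuous_id').continuousOn) (by simp [hΔ0])
          hΔc.continuousOn hΔ0,
        cfcₙ_mul _ _ B hΔc.continuousOn hΔ0 (continuousOn_id' _) rfl,
        cfcₙ_id' ℝ B hBsa]
    have hkey : ‖r * cfcₙ (fun t => Δf t * t * Δf t) B * r‖ ≤ γ⁻¹ * (4 * cmax) := by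
      refine key_est r e B _ hrsa he γ hγ heB hBnn
        (fun t => Δf t * t * Δf t) ((hΔc.mul continuous_id').mul hΔc)
        (fun t ht => ?_) (4 * cmax) (by positivity) (fun t ht => ?_) ?_
      · show (0:ℝ) ≤ Δf t * t * Δf t
        have h7 : Δf t * t * Δf t = t * Δf t ^ 2 := by ring
        rw [h7]; positivity
      · show t * (Δf t * t * Δf t) ≤ 4 * cmax
        have h8 : t * (Δf t * t * Δf t) = (t * Δf t)^2 := by ring
        rw [h8, hcmax]
        simp only [hΔdef]
        exact tmul_diff_sq_le' (cseq_pos n) (cseq_pos m) ht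
      · rw [Unitization.inr_mul, Unitization.inr_mul,
          Unitization.real_cfcₙ_eq_cfc_inr B _ (by simp [hΔ0])]
    have hmain : ‖x‖ * ‖x‖ ≤
        (2 * γ⁻¹ * Real.sqrt cmax) * (2 * γ⁻¹ * Real.sqrt cmax) := by
      have h9 : ‖x‖ * ‖x‖ = ‖x * x‖ := by
        have h9' : ‖star x * x‖ = ‖x‖ * ‖x‖ := CStarRing.norm_star_mul_self
        rw [hxsa.star_eq] at h9'
        exact h9'.symm
      rw [h9]
      calc ‖x * x‖ ≤ ‖γ⁻¹ • (r * (cfcₙ Δf B * B * cfcₙ Δf B) * r)‖ :=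
            CStarAlgebra.norm_le_norm_of_nonneg_of_le hxxpos hxx_le
        _ = γ⁻¹ * ‖r * (cfcₙ Δf B * B * cfcₙ Δf B) * r‖ := by
            rw [norm_smul, Real.norm_eq_abs, abs_of_pos (by positivity)]
        _ ≤ γ⁻¹ * (γ⁻¹ * (4 * cmax)) := by
            refine mul_le_mul_of_nonneg_left ?_ (by positivity)
            rw [hBmid]; exact hkey
        _ = (2 * γ⁻¹ * Real.sqrt cmax) * (2 * γ⁻¹ * Real.sqrt cmax) := by
            conv_lhs => rw [← Real.sq_sqrt hcm.le]
            ring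
    have hs9 : (0:ℝ) ≤ 2 * γ⁻¹ * Real.sqrt cmax := by positivity
    exact (mul_self_le_mul_self_iff (norm_nonneg x) hs9).mpr hmain
  have hcauchy : CauchySeq d := by
    refine cauchySeq_of_le_tendsto_0 (fun N => 2 * γ⁻¹ * Real.sqrt (cseq N))
      (fun n m N hn hm => ?_) ?_
    · rw [dist_eq_norm]
      refine (hdist n m).trans ?_
      have h11 : max (cseq n) (cseq m) ≤ cseq N :=
        max_le (cseq_antitone hn) (cseq_antitone hm)
      have h12 := Real.sqrt_le_sqrt h11
      exact mul_le_mul_of_nonneg_left h12 (by positivity)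
    · have h2 : Tendsto (fun N => Real.sqrt (cseq N)) atTop (𝓝 0) := by
        have := (Real.continuous_sqrt.tendsto' 0 0 (by simp)).comp cseq_tendsto
        exact this
      simpa using h2.const_mul (2 * γ⁻¹)
  obtain ⟨dl, hdl⟩ := cauchySeq_tendsto_of_complete hcauchy
  have hdlsa : star dl = dl := by
    have h12 : Tendsto (fun n => star (d n)) atTop (𝓝 (star dl)) := hdl.star
    have h13 : (fun n => star (d n)) = d := funext fun n => (hdsa n).star_eq
    rw [h13] at h12
    exact tendsto_nhds_unique h12 hdl
  have hdyde : dl * y * dl = e := by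
    have T1 : Tendsto (fun n => d n * y * d n) atTop (𝓝 (dl * y * dl)) :=
      (hdl.mul tendsto_const_nhds).mul hdl
    have T2 : Tendsto (fun n => d n * y * d n) atTop (𝓝 e) := by
      rw [tendsto_iff_dist_tendsto_zero]
      refine squeeze_zero (fun n => dist_nonneg) (fun n => ?_)
        (by simpa using cseq_tendsto.const_mul γ⁻¹)
      rw [dist_eq_norm, ← norm_neg, neg_sub]
      exact hEest n
    exact tendsto_nhds_unique T1 T2
  -- assemble v
  set sqb := cfcₙ (fun t : ℝ => Real.sqrt (max t 0)) b with hsqbdef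
  have hsqc : Continuous (fun t : ℝ => Real.sqrt (max t 0)) :=
    Real.continuous_sqrt.comp (continuous_id.max continuous_const)
  have hsqbsa : IsSelfAdjoint sqb := cfcₙ_predicate _ b
  have hbsa : IsSelfAdjoint b := .of_nonneg hb
  have hsqb2 : sqb * sqb = b := by
    rw [hsqbdef, ← cfcₙ_mul _ _ b hsqc.continuousOn (by simp) hsqc.continuousOn (by simp)]
    have h14 : cfcₙ (fun t : ℝ => Real.sqrt (max t 0) * Real.sqrt (max t 0)) b
        = cfcₙ (fun t : ℝ => t) b := by
      refine cfcₙ_congr fun x hx => ?_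
      have hx0 : 0 ≤ x := quasispectrum_nonneg_of_nonneg b hb x hx
      show Real.sqrt (max x 0) * Real.sqrt (max x 0) = x
      rw [Real.mul_self_sqrt (le_max_right _ _), max_eq_left hx0]
    rw [h14, cfcₙ_id' ℝ b hbsa]
  refine ⟨sqb * (w * dl), ?_, ?_⟩
  · have h15 : star (sqb * (w * dl)) = (star dl * star w) * sqb := by
      rw [star_mul, star_mul, hsqbsa.star_eq]
    rw [h15, hdlsa]
    calc dl * star w * sqb * (sqb * (w * dl))
        = dl * (star w * (sqb * sqb) * w) * dl := by simp [mul_assoc]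
      _ = dl * y * dl := by rw [hsqb2, hy]
      _ = e := hdyde
      _ = cut a δ := hedef.symm
  · have h16 : sqb * (w * dl) * star (sqb * (w * dl))
        = sqb * ((w * dl) * star (w * dl)) * sqb := by
      rw [star_mul, hsqbsa.star_eq]
      simp [mul_assoc]
    rw [h16]
    exact sqrt_conj_mem_her b hb _
end

section
/- Let A be a C*-algebra, let a, b be positive elements of A, and let ε > 0. If ‖a − b‖ < ε, then (a − ε)₊ is Cuntz subequivalent to b. -/
open Filter Topology

variable {A : Type*} [NonUnitalCStarAlgebra A] [PartialOrder A] [StarOrderedRing A]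

private lemma q_eq_aux (c t : ℝ) :
    Real.sqrt (max t 0) / (max t 0 + c) * t * (Real.sqrt (max t 0) / (max t 0 + c))
      = max t 0 * max t 0 / (max t 0 + c) ^ 2 := by
  have hm : 0 ≤ max t 0 := le_max_right t 0
  have h1 : Real.sqrt (max t 0) * Real.sqrt (max t 0) = max t 0 := Real.mul_self_sqrt hm
  have hmt : max t 0 * t = max t 0 * max t 0 := by
    rcases le_total t 0 with h | h
    · simp [max_eq_right h]
    · simp [max_eq_left h]
  rw [show Real.sqrt (max t 0) / (max t 0 + c) * t * (Real.sqrt (max t 0) / (max t 0 + c))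
      = (Real.sqrt (max t 0) * Real.sqrt (max t 0)) * t / (max t 0 + c) ^ 2 from by
    generalize (max t 0 + c) = d
    ring]
  rw [h1, hmt]

/-- In a C*-algebra, `0 ≤ x ≤ y` implies `x` is Cuntz subequivalent to `y`. -/
lemma cuntzLE_of_le {x y : A} (hx : 0 ≤ x) (hy : 0 ≤ y) (hxy : x ≤ y) :
    CuntzLE x y := by
  have hx' : IsSelfAdjoint x := .of_nonneg hx
  have hy' : IsSelfAdjoint y := .of_nonneg hy
  have hgc : Continuous (fun t : ℝ => Real.sqrt (max t 0)) := by fun_prop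
  set xr : A := cfcₙ (fun t : ℝ => Real.sqrt (max t 0)) x with hxrdef
  have hxr_sa : IsSelfAdjoint xr := cfcₙ_predicate _ x
  have hxr2 : xr * xr = x := by
    rw [hxrdef, ← cfcₙ_mul _ _ x hgc.continuousOn (by simp) hgc.continuousOn (by simp)]
    conv_rhs => rw [← cfcₙ_id ℝ x hx']
    apply cfcₙ_congr
    intro t ht
    have ht0 : 0 ≤ t := quasispectrum_nonneg_of_nonneg x hx t ht
    simp [max_eq_left ht0, Real.mul_self_sqrt ht0]
  -- the approximating sequence
  set s : ℕ → ℝ → ℝ := fun n t => Real.sqrt (max t 0) / (max t 0 + ((n : ℝ) + 1)⁻¹) with hsdef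
  have hcpos : ∀ n : ℕ, (0 : ℝ) < ((n : ℝ) + 1)⁻¹ := fun n => by positivity
  have hsc : ∀ n, Continuous (s n) := by
    intro n
    apply Continuous.div (by fun_prop) (by fun_prop)
    intro t
    have h1 : (0 : ℝ) < max t 0 + ((n : ℝ) + 1)⁻¹ := by positivity
    exact h1.ne'
  have hs0 : ∀ n, s n 0 = 0 := fun n => by simp [hsdef]
  set q : ℕ → ℝ → ℝ := fun n t => s n t * t * s n t with hqdef
  have hqc : ∀ n, Continuous (q n) := fun n => ((hsc n).mul continuous_id).mul (hsc n)
  have hq0 : ∀ n, q n 0 = 0 := fun n => by simp [hqdef, hs0 n]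
  have hq_eq : ∀ n t, q n t = max t 0 * max t 0 / (max t 0 + ((n : ℝ) + 1)⁻¹) ^ 2 :=
    fun n t => q_eq_aux _ t
  have hSyS : ∀ n, cfcₙ (q n) y = cfcₙ (s n) y * y * cfcₙ (s n) y := by
    intro n
    rw [hqdef]
    rw [cfcₙ_mul (fun t => s n t * t) (s n) y (by fun_prop)
        (by simp [hs0 n]) (hsc n).continuousOn (hs0 n)]
    rw [cfcₙ_mul (s n) (fun t : ℝ => t) y (hsc n).continuousOn (hs0 n) (by fun_prop) rfl]
    rw [cfcₙ_id' ℝ y hy']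
  -- the key estimate
  have key : ∀ n : ℕ, ‖x - xr * cfcₙ (q n) y * xr‖ ≤ 2 * ((n : ℝ) + 1)⁻¹ := by
    intro n
    set c : ℝ := ((n : ℝ) + 1)⁻¹ with hcdef
    have hc0 : 0 < c := hcpos n
    have hq01 : ∀ t, 0 ≤ q n t ∧ q n t ≤ 1 := by
      intro t
      rw [hq_eq n t]
      have hm : 0 ≤ max t 0 := le_max_right t 0
      constructor
      · positivity
      · rw [div_le_one (by positivity)]
        nlinarith
    set p : ℝ → ℝ := fun t => 1 - q n t with hpdef
    have hp0 : ∀ t, 0 ≤ p t := fun t => sub_nonneg.mpr (hq01 t).2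
    have hpc : Continuous p := continuous_const.sub (hqc n)
    have hY_sa : IsSelfAdjoint (y : Unitization ℂ A) := hy'.inr ℂ
    set R : Unitization ℂ A := cfc (fun t => Real.sqrt (p t)) (y : Unitization ℂ A) with hRdef
    have hR_sa : IsSelfAdjoint R := cfc_predicate _ _
    have hRc : Continuous fun t => Real.sqrt (p t) := by fun_prop
    have hR2 : R * R = 1 - cfc (q n) (y : Unitization ℂ A) := by
      rw [hRdef, ← cfc_mul _ _ _ hRc.continuousOn hRc.continuousOn]
      have h2 : cfc (fun t => Real.sqrt (p t) * Real.sqrt (p t)) (y : Unitization ℂ A)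
          = cfc (fun t => 1 - q n t) (y : Unitization ℂ A) :=
        cfc_congr fun t _ => Real.mul_self_sqrt (hp0 t)
      rw [h2, cfc_sub (fun _ : ℝ => (1 : ℝ)) (q n) _ (by fun_prop) (hqc n).continuousOn,
        cfc_const (1 : ℝ) _, map_one]
    have hQ : ((cfcₙ (q n) y : A) : Unitization ℂ A) = cfc (q n) (y : Unitization ℂ A) :=
      Unitization.real_cfcₙ_eq_cfc_inr y (q n) (hq0 n)
    have hxr_sa' : IsSelfAdjoint (xr : Unitization ℂ A) := hxr_sa.inr ℂ
    have hXQX : ((x - xr * cfcₙ (q n) y * xr : A) : Unitization ℂ A)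
        = star (R * (xr : Unitization ℂ A)) * (R * (xr : Unitization ℂ A)) := by
      rw [Unitization.inr_sub ℂ, Unitization.inr_mul, Unitization.inr_mul, hQ]
      rw [star_mul, hR_sa.star_eq, hxr_sa'.star_eq]
      have hxx : ((x : A) : Unitization ℂ A)
          = (xr : Unitization ℂ A) * (xr : Unitization ℂ A) := by
        rw [← Unitization.inr_mul, hxr2]
      rw [hxx]
      calc (xr : Unitization ℂ A) * xr - (xr : Unitization ℂ A) * cfc (q n) (y : Unitization ℂ A) * xr
          = (xr : Unitization ℂ A) * ((1 - cfc (q n) (y : Unitization ℂ A)) * xr) := by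
            noncomm_ring
        _ = (xr : Unitization ℂ A) * (R * R * xr) := by rw [← hR2]
        _ = (xr : Unitization ℂ A) * R * (R * xr) := by noncomm_ring
    rw [← Unitization.norm_inr (𝕜 := ℂ), hXQX, CStarRing.norm_star_mul_self]
    have h1 : ‖R * (xr : Unitization ℂ A)‖ * ‖R * (xr : Unitization ℂ A)‖
        = ‖R * (x : Unitization ℂ A) * R‖ := by
      rw [← CStarRing.norm_self_mul_star]
      congr 1
      rw [star_mul, hR_sa.star_eq, hxr_sa'.star_eq]
      calc R * (xr : Unitization ℂ A) * ((xr : Unitization ℂ A) * R)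
          = R * ((xr : Unitization ℂ A) * (xr : Unitization ℂ A)) * R := by noncomm_ring
        _ = R * (x : Unitization ℂ A) * R := by rw [← Unitization.inr_mul, hxr2]
    rw [h1]
    have hxy' : (x : Unitization ℂ A) ≤ (y : Unitization ℂ A) :=
      (Unitization.inr_le_iff x y hx' hy').mpr hxy
    have hconj : R * (x : Unitization ℂ A) * R ≤ R * (y : Unitization ℂ A) * R := by
      have h2 := star_left_conjugate_le_conjugate hxy' R
      rwa [hR_sa.star_eq] at h2
    have hposx : 0 ≤ R * (x : Unitization ℂ A) * R := by
      have h2 := star_left_conjugate_nonneg (Unitization.inr_nonneg_iff.mpr hx) R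
      rwa [hR_sa.star_eq] at h2
    refine (CStarAlgebra.norm_le_norm_of_nonneg_of_le hposx hconj).trans ?_
    have hRYR : cfc (fun t => Real.sqrt (p t) * t * Real.sqrt (p t)) (y : Unitization ℂ A)
        = R * (y : Unitization ℂ A) * R := by
      rw [cfc_mul (fun t => Real.sqrt (p t) * t) (fun t => Real.sqrt (p t)) _
        (by fun_prop) hRc.continuousOn]
      rw [cfc_mul (fun t => Real.sqrt (p t)) (fun t : ℝ => t) _ hRc.continuousOn (by fun_prop)]
      rw [cfc_id' ℝ (y : Unitization ℂ A) hY_sa, hRdef]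
    rw [← hRYR]
    apply norm_cfc_le (by positivity)
    intro t ht
    have ht0 : 0 ≤ t := spectrum_nonneg_of_nonneg (Unitization.inr_nonneg_iff.mpr hy) ht
    have h3 : Real.sqrt (p t) * t * Real.sqrt (p t) = p t * t := by
      calc Real.sqrt (p t) * t * Real.sqrt (p t)
          = (Real.sqrt (p t) * Real.sqrt (p t)) * t := by ring
        _ = p t * t := by rw [Real.mul_self_sqrt (hp0 t)]
    rw [h3, Real.norm_eq_abs, abs_of_nonneg (mul_nonneg (hp0 t) ht0)]
    have hqt : q n t = t * t / (t + c) ^ 2 := by rw [hq_eq n t, max_eq_left ht0]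
    have hden : (0 : ℝ) < (t + c) ^ 2 := by positivity
    have h4 : p t * t = (t * (t + c) ^ 2 - t * t * t) / (t + c) ^ 2 := by
      rw [hpdef]
      simp only []
      rw [hqt]
      field_simp
    rw [h4, div_le_iff₀ hden]
    nlinarith [mul_nonneg (mul_nonneg ht0 hc0.le) hc0.le,
      mul_nonneg (mul_nonneg hc0.le hc0.le) hc0.le, mul_nonneg ht0 hc0.le, sq_nonneg (t + c)]
  refine ⟨fun n => cfcₙ (s n) y * xr, ?_⟩
  have hbound : ∀ n, ‖star (cfcₙ (s n) y * xr) * y * (cfcₙ (s n) y * xr) - x‖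
      ≤ 2 * ((n : ℝ) + 1)⁻¹ := by
    intro n
    have hS_sa : IsSelfAdjoint (cfcₙ (s n) y) := cfcₙ_predicate _ y
    have h5 : star (cfcₙ (s n) y * xr) * y * (cfcₙ (s n) y * xr)
        = xr * cfcₙ (q n) y * xr := by
      rw [star_mul, hS_sa.star_eq, hxr_sa.star_eq, hSyS n]
      noncomm_ring
    rw [h5, ← norm_sub_rev]
    exact key n
  apply squeeze_zero (fun n => norm_nonneg _) hbound
  have h6 : Tendsto (fun n : ℕ => ((n : ℝ) + 1)⁻¹) atTop (𝓝 0) := by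
    simpa [one_div] using tendsto_one_div_add_atTop_nhds_zero_nat (𝕜 := ℝ)
  simpa using h6.const_mul 2

theorem stmt_8 (a b : A) (ha : 0 ≤ a) (hb : 0 ≤ b) (ε : ℝ) (hε : 0 < ε)
    (h : ‖a - b‖ < ε) : CuntzLE (cut a ε) b := by
  have ha' : IsSelfAdjoint a := .of_nonneg ha
  have hb' : IsSelfAdjoint b := .of_nonneg hb
  set r : ℝ := ‖a - b‖ with hrdef
  have hr0 : 0 ≤ r := norm_nonneg _
  set f : ℝ → ℝ := fun t => Real.sqrt (max (t - ε) 0 / max t ε) with hfdef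
  have hfc : Continuous f := by
    apply Real.continuous_sqrt.comp
    apply Continuous.div (by fun_prop) (by fun_prop)
    intro t
    exact (lt_of_lt_of_le hε (le_max_right t ε)).ne'
  have hf0 : f 0 = 0 := by
    have h1 : max (0 - ε) 0 = 0 := max_eq_right (by linarith)
    simp [hfdef, h1]
    exact Or.inl hε.le
  set e : A := cfcₙ f a with hedef
  have he_sa : IsSelfAdjoint e := cfcₙ_predicate _ a
  have hcut_nonneg : 0 ≤ cut a ε := by
    unfold cut
    exact cfcₙ_nonneg fun t _ => le_max_right _ _
  -- (1) e * a * e = cut a ε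
  have heae : e * a * e = cut a ε := by
    have h1 : cfcₙ (fun t : ℝ => f t * t * f t) a = e * a * e := by
      rw [cfcₙ_mul (fun t => f t * t) f a (by fun_prop) (by simp [hf0]) hfc.continuousOn hf0]
      rw [cfcₙ_mul f (fun t : ℝ => t) a hfc.continuousOn hf0 (by fun_prop) rfl]
      rw [cfcₙ_id' ℝ a ha', hedef]
    rw [← h1]
    unfold cut
    apply cfcₙ_congr
    intro t ht
    have ht0 : 0 ≤ t := quasispectrum_nonneg_of_nonneg a ha t ht
    show f t * t * f t = max (t - ε) 0
    rcases le_or_gt t ε with hcase | hcase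
    · have h2 : max (t - ε) 0 = 0 := max_eq_right (by linarith)
      simp [hfdef, h2]
    · have hmax : max t ε = t := max_eq_left hcase.le
      have hnum : max (t - ε) 0 = t - ε := max_eq_left (by linarith)
      have htpos : 0 < t := hε.trans hcase
      have hquot : 0 ≤ (t - ε) / t := div_nonneg (by linarith) htpos.le
      have hff : f t * f t = (t - ε) / t := by
        rw [hfdef]
        simp only [hmax, hnum]
        exact Real.mul_self_sqrt hquot
      calc f t * t * f t = (f t * f t) * t := by ring
        _ = (t - ε) / t * t := by rw [hff]
        _ = t - ε := div_mul_cancel₀ _ htpos.ne'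
        _ = max (t - ε) 0 := hnum.symm
  -- (2) e * e ≤ ε⁻¹ • cut a ε
  have hee : e * e ≤ ε⁻¹ • cut a ε := by
    have h1 : e * e = cfcₙ (fun t => f t * f t) a := by
      rw [cfcₙ_mul f f a hfc.continuousOn hf0 hfc.continuousOn hf0, hedef]
    have h2 : ε⁻¹ • cut a ε = cfcₙ (fun t : ℝ => ε⁻¹ • max (t - ε) 0) a := by
      unfold cut
      rw [cfcₙ_smul ε⁻¹ _ a (by fun_prop) (by rw [max_eq_right (by linarith : (0:ℝ) - ε ≤ 0)])]
    rw [h1, h2]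
    apply cfcₙ_mono _ ((hfc.mul hfc).continuousOn) (by fun_prop) (by simp [hf0])
      (by rw [max_eq_right (by linarith : (0:ℝ) - ε ≤ 0)]; simp)
    intro t ht
    have hquot : 0 ≤ max (t - ε) 0 / max t ε :=
      div_nonneg (le_max_right _ _) (lt_of_lt_of_le hε (le_max_right t ε)).le
    have hff : f t * f t = max (t - ε) 0 / max t ε := Real.mul_self_sqrt hquot
    rw [Pi.mul_apply, hff, smul_eq_mul, ← div_eq_inv_mul]
    exact div_le_div_of_nonneg_left (le_max_right _ _) hε (le_max_right t ε)
  -- (3) conjugation bound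
  have hconj : e * (a - b) * e ≤ r • (e * e) := by
    have h1 := CStarAlgebra.star_left_conjugate_le_norm_smul (a := e) (b := a - b)
      (ha'.sub hb')
    rwa [he_sa.star_eq, ← hrdef] at h1
  -- (4) lower bound for e * b * e
  have hebe : e * b * e = cut a ε - e * (a - b) * e := by
    rw [← heae]; noncomm_ring
  set κ : ℝ := 1 - r * ε⁻¹ with hκdef
  have hκ : 0 < κ := by
    rw [hκdef]
    have : r * ε⁻¹ < 1 := by
      rw [← div_eq_mul_inv, div_lt_one hε]
      exact h
    linarith
  have hκcut : κ • cut a ε ≤ e * b * e := by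
    rw [hebe]
    have h5 : e * (a - b) * e ≤ (r * ε⁻¹) • cut a ε := by
      refine hconj.trans ?_
      rw [mul_smul]
      exact smul_le_smul_of_nonneg_left hee hr0
    calc κ • cut a ε = cut a ε - (r * ε⁻¹) • cut a ε := by
          rw [hκdef, sub_smul, one_smul]
      _ ≤ cut a ε - e * (a - b) * e := sub_le_sub_left h5 _
  have hebe_nonneg : 0 ≤ e * b * e := by
    have h2 := star_left_conjugate_nonneg hb e
    rwa [he_sa.star_eq] at h2
  have hcut_le : cut a ε ≤ κ⁻¹ • (e * b * e) := by
    have h2 := smul_le_smul_of_nonneg_left hκcut (inv_nonneg.mpr hκ.le)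
    rwa [smul_smul, inv_mul_cancel₀ hκ.ne', one_smul] at h2
  have hy2 : 0 ≤ κ⁻¹ • (e * b * e) := smul_nonneg (inv_nonneg.mpr hκ.le) hebe_nonneg
  obtain ⟨w, hw⟩ := cuntzLE_of_le hcut_nonneg hy2 hcut_le
  refine ⟨fun n => e * (Real.sqrt κ⁻¹ • w n), ?_⟩
  have heq : ∀ n, star (e * (Real.sqrt κ⁻¹ • w n)) * b * (e * (Real.sqrt κ⁻¹ • w n))
      = star (w n) * (κ⁻¹ • (e * b * e)) * w n := by
    intro n
    simp only [star_mul, star_smul, star_trivial, he_sa.star_eq, smul_mul_assoc,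
      mul_smul_comm, smul_smul]
    rw [Real.mul_self_sqrt (inv_nonneg.mpr hκ.le)]
    congr 1
    simp [mul_assoc]
  have hfun : (fun n => ‖star (e * (Real.sqrt κ⁻¹ • w n)) * b * (e * (Real.sqrt κ⁻¹ • w n))
      - cut a ε‖) = fun n => ‖star (w n) * (κ⁻¹ • (e * b * e)) * w n - cut a ε‖ := by
    funext n
    rw [heq n]
  rw [hfun]
  exact hw
end

section
/- Let A be a C*-algebra and let a, b be positive elements of A. Then a is Cuntz subequivalent to b if and only if for every ε > 0 there exists v ∈ A such that (a − ε)₊ = v* b v. -/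
open Filter Topology

variable {A : Type*} [NonUnitalCStarAlgebra A] [PartialOrder A] [StarOrderedRing A]

section RealAux

private lemma real_aux1 {ρ δ ε₁ ε t : ℝ} (hρ0 : 0 ≤ ρ) (hρε : ρ < ε)
    (hδ : δ = (ε - ρ)/2) (hε₁ : ε₁ = (ρ + ε)/2) :
    max (t - ε) 0 ≤ δ⁻¹ * ((t - ρ) * max (t - ε₁) 0) := by
  have hδ0 : 0 < δ := by rw [hδ]; linarith
  rcases le_total t ε₁ with h | h
  · rw [max_eq_right (by linarith : t - ε₁ ≤ 0), max_eq_right (by linarith : t - ε ≤ 0)]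
    simp
  · rw [max_eq_left (by linarith : (0:ℝ) ≤ t - ε₁)]
    rcases le_total t ε with h2 | h2
    · rw [max_eq_right (by linarith : t - ε ≤ 0)]
      have h3 : 0 ≤ (t - ρ) * (t - ε₁) := mul_nonneg (by linarith) (by linarith)
      positivity
    · rw [max_eq_left (by linarith : (0:ℝ) ≤ t - ε)]
      have h4 : δ * (t - ε) ≤ (t - ρ) * (t - ε₁) := by nlinarith
      calc t - ε = δ⁻¹ * (δ * (t - ε)) := by field_simp
        _ ≤ δ⁻¹ * ((t - ρ) * (t - ε₁)) :=
            mul_le_mul_of_nonneg_left h4 (by positivity)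

private lemma real_aux2 {ρ δ ε₁ ε t : ℝ} (hρ0 : 0 ≤ ρ) (hρε : ρ < ε)
    (hδ : δ = (ε - ρ)/2) (hε₁ : ε₁ = (ρ + ε)/2) :
    max (t - ε₁) 0 ≤ δ⁻¹ * ((t - ρ) * max (t - ε₁) 0) := by
  have hδ0 : 0 < δ := by rw [hδ]; linarith
  rcases le_total t ε₁ with h | h
  · rw [max_eq_right (by linarith : t - ε₁ ≤ 0)]
    simp
  · rw [max_eq_left (by linarith : (0:ℝ) ≤ t - ε₁)]
    have h4 : δ * (t - ε₁) ≤ (t - ρ) * (t - ε₁) :=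
      mul_le_mul_of_nonneg_right (by rw [hδ]; rw [hε₁] at h; linarith) (by linarith)
    calc t - ε₁ = δ⁻¹ * (δ * (t - ε₁)) := by field_simp
      _ ≤ δ⁻¹ * ((t - ρ) * (t - ε₁)) := mul_le_mul_of_nonneg_left h4 (by positivity)

private lemma real_aux3 {s s' t : ℝ} (hs' : 0 < s') (hss : s' ≤ s) (ht : 0 ≤ t) :
    t * ((Real.sqrt (t + s'))⁻¹ - (Real.sqrt (t + s))⁻¹) ≤ Real.sqrt s := by
  have hs0 : 0 < s := lt_of_lt_of_le hs' hss
  set u := Real.sqrt (t + s') with hu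
  set w := Real.sqrt (t + s) with hw
  have hu0 : 0 < u := Real.sqrt_pos.mpr (by linarith)
  have hw0 : 0 < w := Real.sqrt_pos.mpr (by linarith)
  have huw : u ≤ w := Real.sqrt_le_sqrt (by linarith)
  have htu : Real.sqrt t ≤ u := Real.sqrt_le_sqrt (by linarith)
  have htw : Real.sqrt t ≤ w := Real.sqrt_le_sqrt (by linarith)
  have ht2 : t ≤ u * w := by
    nlinarith [Real.mul_self_sqrt ht, Real.sqrt_nonneg t]
  have key : t * (u⁻¹ - w⁻¹) = (w - u) * (t / (u * w)) := by
    field_simp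
  have hdiv : t / (u * w) ≤ 1 := (div_le_one (by positivity)).mpr ht2
  have hwu : w - u ≤ Real.sqrt s := by
    have h1 : w ≤ Real.sqrt t + Real.sqrt s := by
      rw [hw]
      rw [Real.sqrt_le_left (by positivity)]
      nlinarith [Real.sq_sqrt ht, Real.sq_sqrt hs0.le, Real.sqrt_nonneg t, Real.sqrt_nonneg s,
        mul_nonneg (Real.sqrt_nonneg t) (Real.sqrt_nonneg s)]
    linarith
  calc t * (u⁻¹ - w⁻¹) = (w - u) * (t / (u * w)) := key
    _ ≤ (w - u) * 1 := mul_le_mul_of_nonneg_left hdiv (by linarith)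
    _ ≤ Real.sqrt s := by linarith

end RealAux

section UnitalHelpers

variable {W : Type*} [CStarAlgebra W] [PartialOrder W] [StarOrderedRing W]

private lemma smul_le_smul_cstar {r : ℝ} (hr : 0 ≤ r) {p q : W} (h : p ≤ q) :
    r • p ≤ r • q := by
  have hc := star_left_conjugate_le_conjugate h (Real.sqrt r • (1 : W))
  have hstar : star (Real.sqrt r • (1 : W)) = Real.sqrt r • 1 := by
    simp [star_smul]
  rw [hstar] at hc
  have habs : ∀ z : W, (Real.sqrt r • (1 : W)) * z * (Real.sqrt r • (1 : W)) = r • z := by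
    intro z
    rw [smul_mul_assoc, mul_smul_comm, one_mul, mul_one, smul_smul, Real.mul_self_sqrt hr]
  rwa [habs p, habs q] at hc

private lemma sandwich_norm_le {E Z : W} {k M : ℝ} (hE : IsSelfAdjoint E) (hZ : 0 ≤ Z)
    (hk : 0 ≤ k) (hM : 0 ≤ M) (hEE : E * E ≤ k • Z) (φ : ℝ → ℝ)
    (hφc : ContinuousOn φ (spectrum ℝ Z)) (hφ0 : ∀ t ∈ spectrum ℝ Z, 0 ≤ φ t)
    (hφM : ∀ t ∈ spectrum ℝ Z, t * φ t ≤ M) :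
    ‖E * cfc φ Z * E‖ ≤ k * M := by
  have hZsa : IsSelfAdjoint Z := .of_nonneg hZ
  have hψc : ContinuousOn (fun t => Real.sqrt (φ t)) (spectrum ℝ Z) :=
    Real.continuous_sqrt.comp_continuousOn hφc
  set F := cfc (fun t => Real.sqrt (φ t)) Z with hF
  have hF0 : 0 ≤ F := cfc_nonneg (fun t _ => Real.sqrt_nonneg _)
  have hFsa : IsSelfAdjoint F := .of_nonneg hF0
  have hsplit : cfc φ Z = F * F := by
    rw [hF, ← cfc_mul _ _ Z hψc hψc]
    exact cfc_congr (fun t ht => (Real.mul_self_sqrt (hφ0 t ht)).symm)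
  have hkey : E * cfc φ Z * E = star (F * E) * (F * E) := by
    rw [hsplit, star_mul, hFsa.star_eq, hE.star_eq]
    noncomm_ring
  have h1 : ‖E * cfc φ Z * E‖ = ‖F * E‖ * ‖F * E‖ := by
    rw [hkey, CStarRing.norm_star_mul_self]
  have h2 : ‖F * E‖ * ‖F * E‖ = ‖F * (E * E) * F‖ := by
    have hh : (F * E) * star (F * E) = F * (E * E) * F := by
      rw [star_mul, hFsa.star_eq, hE.star_eq]
      noncomm_ring
    rw [← CStarRing.norm_self_mul_star (x := F * E), hh]
  have h3 : F * (E * E) * F ≤ k • (F * Z * F) := by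
    have hc := star_left_conjugate_le_conjugate hEE F
    rw [hFsa.star_eq] at hc
    calc F * (E * E) * F ≤ F * (k • Z) * F := hc
      _ = k • (F * Z * F) := by rw [mul_smul_comm, smul_mul_assoc]
  have h4 : 0 ≤ F * (E * E) * F := by
    have hh : 0 ≤ star (E * F) * (E * F) := star_mul_self_nonneg _
    have he : star (E * F) * (E * F) = F * (E * E) * F := by
      rw [star_mul, hFsa.star_eq, hE.star_eq]
      noncomm_ring
    rwa [he] at hh
  have h5 : ‖F * (E * E) * F‖ ≤ ‖k • (F * Z * F)‖ :=
    CStarAlgebra.norm_le_norm_of_nonneg_of_le h4 h3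
  have h6 : F * Z * F = cfc (fun t => Real.sqrt (φ t) * t * Real.sqrt (φ t)) Z := by
    have hZid : Z = cfc (fun t : ℝ => t) Z := (cfc_id' ℝ Z hZsa).symm
    conv_lhs => rw [hZid]
    rw [hF, ← cfc_mul _ _ Z hψc (continuousOn_id' _), ← cfc_mul (fun x => Real.sqrt (φ x) * x) _ Z
      (hψc.mul (continuousOn_id' _)) hψc]
  have h7 : ‖cfc (fun t => Real.sqrt (φ t) * t * Real.sqrt (φ t)) Z‖ ≤ M := by
    refine norm_cfc_le hM (fun t ht => ?_)
    have ht0 : 0 ≤ t := spectrum_nonneg_of_nonneg hZ ht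
    have : Real.sqrt (φ t) * t * Real.sqrt (φ t) = t * φ t := by
      rw [mul_comm (Real.sqrt (φ t)) t, mul_assoc, Real.mul_self_sqrt (hφ0 t ht)]
    rw [Real.norm_eq_abs, this, abs_of_nonneg (mul_nonneg ht0 (hφ0 t ht))]
    exact hφM t ht
  calc ‖E * cfc φ Z * E‖ = ‖F * (E * E) * F‖ := by rw [h1, h2]
    _ ≤ ‖k • (F * Z * F)‖ := h5
    _ = k * ‖F * Z * F‖ := by rw [norm_smul, Real.norm_of_nonneg hk]
    _ ≤ k * M := by rw [h6]; exact mul_le_mul_of_nonneg_left h7 hk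

end UnitalHelpers

open scoped CStarAlgebra
set_option maxHeartbeats 1000000
set_option synthInstance.maxHeartbeats 400000

private lemma norm_lemma (a c : A) (ha : 0 ≤ a) (hc : 0 ≤ c) {ε : ℝ}
    (hρ : ‖a - c‖ < ε) : ∃ t : A, cut a ε = star t * c * t := by
  set ρ : ℝ := ‖a - c‖ with hρdef
  have hρ0 : 0 ≤ ρ := norm_nonneg _
  have hε0 : 0 < ε := hρ0.trans_lt hρ
  set δ : ℝ := (ε - ρ)/2 with hδdef
  set ε₁ : ℝ := (ρ + ε)/2 with hε₁def
  have hδ0 : 0 < δ := by rw [hδdef]; linarith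
  have hδinv : 0 ≤ δ⁻¹ := by positivity
  have hε₁0 : 0 < ε₁ := by rw [hε₁def]; linarith
  -- base facts in the unitization
  have haW : 0 ≤ (a : A⁺¹) := Unitization.inr_nonneg_iff.mpr ha
  have hcW : 0 ≤ (c : A⁺¹) := Unitization.inr_nonneg_iff.mpr hc
  have haWsa : IsSelfAdjoint (a : A⁺¹) := .of_nonneg haW
  have hcWsa : IsSelfAdjoint (c : A⁺¹) := .of_nonneg hcW
  -- functions
  set fe : ℝ → ℝ := fun t => max (t - ε) 0 with hfedef
  set fe₁ : ℝ → ℝ := fun t => max (t - ε₁) 0 with hfe₁def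
  set fE : ℝ → ℝ := fun t => Real.sqrt (max (t - ε) 0) with hfEdef
  set fx : ℝ → ℝ := fun t => Real.sqrt (max (t - ε₁) 0) with hfxdef
  set fP : ℝ → ℝ := fun t => (t - ρ) * max (t - ε₁) 0 with hfPdef
  have hfec : Continuous fe := (continuous_id.sub continuous_const).max continuous_const
  have hfe₁c : Continuous fe₁ := (continuous_id.sub continuous_const).max continuous_const
  have hfEc : Continuous fE := Real.continuous_sqrt.comp hfec
  have hfxc : Continuous fx := Real.continuous_sqrt.comp hfe₁c
  have hfPc : Continuous fP := (continuous_id.sub continuous_const).mul hfe₁c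
  -- elements
  set E : A⁺¹ := cfc fE (a : A⁺¹) with hEdef
  set x : A⁺¹ := cfc fx (a : A⁺¹) with hxdef
  set e' : A⁺¹ := cfc fe (a : A⁺¹) with he'def
  have hE0 : 0 ≤ E := cfc_nonneg (fun t _ => Real.sqrt_nonneg _)
  have hx0 : 0 ≤ x := cfc_nonneg (fun t _ => Real.sqrt_nonneg _)
  have hEsa : IsSelfAdjoint E := .of_nonneg hE0
  have hxsa : IsSelfAdjoint x := .of_nonneg hx0
  set Z : A⁺¹ := x * (c : A⁺¹) * x with hZdef
  have hZ0 : 0 ≤ Z := by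
    have h := star_left_conjugate_nonneg hcW x
    rwa [hxsa.star_eq] at h
  have hZsa : IsSelfAdjoint Z := .of_nonneg hZ0
  have hσZ : ∀ t ∈ spectrum ℝ Z, 0 ≤ t := fun t ht => spectrum_nonneg_of_nonneg hZ0 ht
  -- E * E = e',  x * x = cfc fe₁
  have hEE : E * E = e' := by
    rw [hEdef, ← cfc_mul _ _ _ hfEc.continuousOn hfEc.continuousOn, he'def]
    exact cfc_congr (fun t _ => Real.mul_self_sqrt (le_max_right _ _))
  have hxx : x * x = cfc fe₁ (a : A⁺¹) := by
    rw [hxdef, ← cfc_mul _ _ _ hfxc.continuousOn hfxc.continuousOn]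
    exact cfc_congr (fun t _ => Real.mul_self_sqrt (le_max_right _ _))
  -- P represented by cfc
  have h1 : x * (a : A⁺¹) * x = cfc (fun t : ℝ => fx t * t * fx t) (a : A⁺¹) := by
    conv_lhs => rw [show (a : A⁺¹) = cfc (fun t : ℝ => t) (a : A⁺¹) from
      (cfc_id' ℝ _ haWsa).symm]
    rw [hxdef, ← cfc_mul fx (fun t : ℝ => t) _ hfxc.continuousOn (continuousOn_id' _),
      ← cfc_mul (fun t : ℝ => fx t * t) fx _ (hfxc.mul continuous_id).continuousOn
        hfxc.continuousOn]
  have hPrep : x * (a : A⁺¹) * x - ρ • (x * x) = cfc fP (a : A⁺¹) := by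
    have h2 : ρ • (x * x) = cfc (fun t => ρ • (fe₁ t)) (a : A⁺¹) := by
      rw [hxx, cfc_smul ρ fe₁ _ hfe₁c.continuousOn]
    have h3 : cfc fP (a : A⁺¹) =
        cfc (fun t : ℝ => fx t * t * fx t - ρ • fe₁ t) (a : A⁺¹) := by
      refine cfc_congr (fun t _ => ?_)
      have hsq : fx t * fx t = max (t - ε₁) 0 := Real.mul_self_sqrt (le_max_right _ _)
      have hcomm : fx t * t * fx t = t * (fx t * fx t) := by ring
      simp only [smul_eq_mul, hfPdef, hfe₁def, hcomm, hsq]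
      ring
    rw [h1, h2, h3, cfc_sub (fun t : ℝ => fx t * t * fx t) (fun t : ℝ => ρ • fe₁ t) _
      ((hfxc.mul continuous_id).mul hfxc).continuousOn (hfe₁c.const_smul ρ).continuousOn]
  -- P ≤ Z
  have hq : (0 : A⁺¹) ≤ (c : A⁺¹) - ((a : A⁺¹) - algebraMap ℝ A⁺¹ ρ) := by
    have h2 : ((a : A⁺¹) - (c : A⁺¹)) ≤ algebraMap ℝ A⁺¹ ‖(a : A⁺¹) - (c : A⁺¹)‖ :=
      IsSelfAdjoint.le_algebraMap_norm_self (haWsa.sub hcWsa)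
    have h3 : ‖(a : A⁺¹) - (c : A⁺¹)‖ = ρ := by
      rw [← Unitization.inr_sub ℂ a c, Unitization.norm_inr]
    rw [h3] at h2
    have h4 : (c : A⁺¹) - ((a : A⁺¹) - algebraMap ℝ A⁺¹ ρ)
        = algebraMap ℝ A⁺¹ ρ - ((a : A⁺¹) - (c : A⁺¹)) := by abel
    rw [h4]
    exact sub_nonneg.mpr h2
  have hPZ : cfc fP (a : A⁺¹) ≤ Z := by
    have hconj := star_left_conjugate_nonneg hq x
    rw [hxsa.star_eq] at hconj
    have hexpand : x * ((c : A⁺¹) - ((a : A⁺¹) - algebraMap ℝ A⁺¹ ρ)) * x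
        = Z - (x * (a : A⁺¹) * x - ρ • (x * x)) := by
      rw [Algebra.algebraMap_eq_smul_one, hZdef]
      simp only [mul_sub, sub_mul, mul_smul_comm, smul_mul_assoc, mul_one]
      try abel
    rw [hexpand, hPrep] at hconj
    exact sub_nonneg.mp hconj
  -- key inequalities
  have he'Z : e' ≤ δ⁻¹ • Z := by
    have h1 : e' ≤ cfc (fun t => δ⁻¹ * fP t) (a : A⁺¹) := by
      rw [he'def]
      exact cfc_mono (fun t _ => real_aux1 hρ0 hρ hδdef hε₁def) hfec.continuousOn
        (continuous_const.mul hfPc).continuousOn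
    have h2 : cfc (fun t => δ⁻¹ * fP t) (a : A⁺¹) = δ⁻¹ • cfc fP (a : A⁺¹) :=
      cfc_const_mul δ⁻¹ fP _ hfPc.continuousOn
    calc e' ≤ cfc (fun t => δ⁻¹ * fP t) (a : A⁺¹) := h1
      _ = δ⁻¹ • cfc fP (a : A⁺¹) := h2
      _ ≤ δ⁻¹ • Z := smul_le_smul_cstar hδinv hPZ
  have hxxZ : x * x ≤ δ⁻¹ • Z := by
    have h1 : x * x ≤ cfc (fun t => δ⁻¹ * fP t) (a : A⁺¹) := by
      rw [hxx]
      exact cfc_mono (fun t _ => real_aux2 hρ0 hρ hδdef hε₁def) hfe₁c.continuousOn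
        (continuous_const.mul hfPc).continuousOn
    calc x * x ≤ cfc (fun t => δ⁻¹ * fP t) (a : A⁺¹) := h1
      _ = δ⁻¹ • cfc fP (a : A⁺¹) := cfc_const_mul δ⁻¹ fP _ hfPc.continuousOn
      _ ≤ δ⁻¹ • Z := smul_le_smul_cstar hδinv hPZ
  -- resolvent-type elements
  set g : ℝ → ℝ → ℝ := fun s t => (Real.sqrt (t + s))⁻¹ with hgdef
  have hgc : ∀ s : ℝ, 0 < s → ContinuousOn (g s) (spectrum ℝ Z) := by
    intro s hs
    refine ContinuousOn.inv₀
      (Real.continuous_sqrt.comp (continuous_id.add continuous_const)).continuousOn ?_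
    intro t ht
    exact (Real.sqrt_pos.mpr (by linarith [hσZ t ht])).ne'
  have hg0 : ∀ s t, 0 ≤ g s t := fun s t => inv_nonneg.mpr (Real.sqrt_nonneg _)
  set T : ℝ → A⁺¹ := fun s => x * cfc (g s) Z * E with hTdef
  have hGZG : ∀ φ : ℝ → ℝ, ContinuousOn φ (spectrum ℝ Z) →
      cfc (fun t => φ t * t * φ t) Z = cfc φ Z * Z * cfc φ Z := by
    intro φ hφ
    rw [cfc_mul (fun t => φ t * t) φ Z (hφ.mul (continuousOn_id' _)) hφ,
      cfc_mul φ (fun t : ℝ => t) Z hφ (continuousOn_id' _), cfc_id' ℝ Z hZsa]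
  have heq1 : ∀ s : ℝ, 0 < s → star (T s) * (c : A⁺¹) * T s
      = E * cfc (fun t => g s t * t * g s t) Z * E := by
    intro s hs
    have hGsa : IsSelfAdjoint (cfc (g s) Z) := .of_nonneg (cfc_nonneg fun t _ => hg0 s t)
    have h1 : star (T s) * (c : A⁺¹) * T s
        = E * (cfc (g s) Z * Z * cfc (g s) Z) * E := by
      simp only [hTdef]
      simp only [star_mul, hGsa.star_eq, hxsa.star_eq, hEsa.star_eq]
      rw [hZdef]
      simp only [mul_assoc]
    rw [h1, ← hGZG (g s) (hgc s hs)]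
  have heq2 : ∀ s : ℝ, 0 < s → e' - star (T s) * (c : A⁺¹) * T s
      = E * cfc (fun t => 1 - g s t * t * g s t) Z * E := by
    intro s hs
    rw [heq1 s hs, ← hEE]
    have hs1 : cfc (fun t : ℝ => 1 - g s t * t * g s t) Z
        = 1 - cfc (fun t => g s t * t * g s t) Z := by
      rw [cfc_sub (fun _ : ℝ => 1) (fun t => g s t * t * g s t) Z continuousOn_const
        (((hgc s hs).mul (continuousOn_id' _)).mul (hgc s hs)), cfc_const 1 Z hZsa]
      simp
    rw [hs1]
    noncomm_ring
  have hbound2 : ∀ s : ℝ, 0 < s → ‖e' - star (T s) * (c : A⁺¹) * T s‖ ≤ δ⁻¹ * s := by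
    intro s hs
    rw [heq2 s hs]
    have hgg : ∀ t ∈ spectrum ℝ Z, g s t * t * g s t = t * (t + s)⁻¹ := by
      intro t ht
      have hts : (0:ℝ) < t + s := by linarith [hσZ t ht]
      rw [hgdef]
      simp only
      rw [mul_comm ((Real.sqrt (t + s))⁻¹) t, mul_assoc, ← mul_inv,
        Real.mul_self_sqrt hts.le]
    refine sandwich_norm_le hEsa hZ0 hδinv hs.le (by rw [hEE]; exact he'Z) _
      (continuousOn_const.sub (((hgc s hs).mul (continuousOn_id' _)).mul (hgc s hs)))
      ?_ ?_
    · intro t ht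
      have hts : (0:ℝ) < t + s := by linarith [hσZ t ht]
      rw [hgg t ht, sub_nonneg, ← div_eq_mul_inv, div_le_one hts]
      linarith
    · intro t ht
      have ht0 := hσZ t ht
      have hts : (0:ℝ) < t + s := by linarith
      rw [hgg t ht]
      have h1 : 1 - t * (t + s)⁻¹ = s * (t + s)⁻¹ := by
        field_simp
        ring
      rw [h1, show t * (s * (t + s)⁻¹) = s * (t / (t + s)) by rw [div_eq_mul_inv]; ring]
      calc s * (t / (t + s)) ≤ s * 1 :=
            mul_le_mul_of_nonneg_left ((div_le_one hts).mpr (by linarith)) hs.le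
        _ = s := mul_one s
  have hTdiff : ∀ s s' : ℝ, 0 < s' → s' ≤ s → ‖T s' - T s‖ ≤ δ⁻¹ * Real.sqrt s := by
    intro s s' hs' hss
    have hs : 0 < s := lt_of_lt_of_le hs' hss
    set d : ℝ → ℝ := fun t => g s' t - g s t with hddef
    have hdc : ContinuousOn d (spectrum ℝ Z) := (hgc s' hs').sub (hgc s hs)
    have hd0 : ∀ t ∈ spectrum ℝ Z, 0 ≤ d t := by
      intro t ht
      have ht0 := hσZ t ht
      have h1 : Real.sqrt (t + s') ≤ Real.sqrt (t + s) := Real.sqrt_le_sqrt (by linarith)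
      have h2 : 0 < Real.sqrt (t + s') := Real.sqrt_pos.mpr (by linarith)
      simp only [hddef, hgdef, sub_nonneg]
      exact inv_anti₀ h2 h1
    set D : A⁺¹ := cfc d Z with hDdef
    have hDsa : IsSelfAdjoint D := .of_nonneg (cfc_nonneg hd0)
    have hcfcd : D = cfc (g s') Z - cfc (g s) Z := by
      rw [hDdef, hddef]
      exact cfc_sub _ _ Z (hgc s' hs') (hgc s hs)
    have hTd : T s' - T s = x * D * E := by
      simp only [hTdef, hcfcd]
      noncomm_ring
    have hstar1 : star (x * D * E) * (x * D * E) = E * (D * (x * x) * D) * E := by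
      simp only [star_mul, hDsa.star_eq, hxsa.star_eq, hEsa.star_eq, mul_assoc]
    have hmid : D * (x * x) * D ≤ δ⁻¹ • (D * Z * D) := by
      have hcj := star_left_conjugate_le_conjugate hxxZ D
      rw [hDsa.star_eq] at hcj
      calc D * (x * x) * D ≤ D * (δ⁻¹ • Z) * D := hcj
        _ = δ⁻¹ • (D * Z * D) := by rw [mul_smul_comm, smul_mul_assoc]
    have houter : E * (D * (x * x) * D) * E ≤ δ⁻¹ • (E * (D * Z * D) * E) := by
      have hcj := star_left_conjugate_le_conjugate hmid E
      rw [hEsa.star_eq] at hcj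
      calc E * (D * (x * x) * D) * E ≤ E * (δ⁻¹ • (D * Z * D)) * E := hcj
        _ = δ⁻¹ • (E * (D * Z * D) * E) := by rw [mul_smul_comm, smul_mul_assoc]
    have hpos : 0 ≤ E * (D * (x * x) * D) * E := by
      have h := star_mul_self_nonneg (x * D * E)
      rwa [hstar1] at h
    have hDZD : D * Z * D = cfc (fun t => d t * t * d t) Z := by
      rw [hDdef]
      exact (hGZG d hdc).symm
    have hnormin : ‖E * cfc (fun t => d t * t * d t) Z * E‖ ≤ δ⁻¹ * s := by
      refine sandwich_norm_le hEsa hZ0 hδinv hs.le (by rw [hEE]; exact he'Z) _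
        ((hdc.mul (continuousOn_id' _)).mul hdc) ?_ ?_
      · intro t ht
        have ht0 := hσZ t ht
        rw [show d t * t * d t = t * (d t * d t) by ring]
        exact mul_nonneg ht0 (mul_self_nonneg _)
      · intro t ht
        have ht0 := hσZ t ht
        have h1 : t * d t ≤ Real.sqrt s := by
          simpa [hddef, hgdef, mul_sub] using real_aux3 hs' hss ht0
        have h2 : 0 ≤ t * d t := mul_nonneg ht0 (hd0 t ht)
        rw [show t * (d t * t * d t) = (t * d t) * (t * d t) by ring]
        calc (t * d t) * (t * d t) ≤ Real.sqrt s * Real.sqrt s :=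
              mul_le_mul h1 h1 h2 (Real.sqrt_nonneg _)
          _ = s := Real.mul_self_sqrt hs.le
    have hnormsq : ‖T s' - T s‖ * ‖T s' - T s‖ ≤ δ⁻¹ * (δ⁻¹ * s) := by
      rw [hTd, ← CStarRing.norm_star_mul_self, hstar1]
      calc ‖E * (D * (x * x) * D) * E‖ ≤ ‖δ⁻¹ • (E * (D * Z * D) * E)‖ :=
            CStarAlgebra.norm_le_norm_of_nonneg_of_le hpos houter
        _ = δ⁻¹ * ‖E * (D * Z * D) * E‖ := by
            rw [norm_smul, Real.norm_of_nonneg hδinv]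
        _ ≤ δ⁻¹ * (δ⁻¹ * s) := by
            rw [hDZD]
            exact mul_le_mul_of_nonneg_left hnormin hδinv
    have hrhs : δ⁻¹ * Real.sqrt s = Real.sqrt (δ⁻¹ * (δ⁻¹ * s)) := by
      rw [show δ⁻¹ * (δ⁻¹ * s) = (δ⁻¹)^2 * s by ring, Real.sqrt_mul (sq_nonneg _),
        Real.sqrt_sq hδinv]
    calc ‖T s' - T s‖ = Real.sqrt (‖T s' - T s‖ * ‖T s' - T s‖) :=
          (Real.sqrt_mul_self (norm_nonneg _)).symm
      _ ≤ Real.sqrt (δ⁻¹ * (δ⁻¹ * s)) := Real.sqrt_le_sqrt hnormsq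
      _ = δ⁻¹ * Real.sqrt s := hrhs.symm
  -- the approximating sequence
  have hspos : ∀ n : ℕ, (0:ℝ) < 1/(n+1) := fun n => by positivity
  set seq : ℕ → A⁺¹ := fun n => T (1/(n+1)) with hseqdef
  have hsmono : ∀ {n m : ℕ}, n ≤ m → (1:ℝ)/(m+1) ≤ 1/(n+1) := by
    intro n m h
    have h1 : ((n:ℝ)+1) ≤ ((m:ℝ)+1) := by exact_mod_cast Nat.succ_le_succ h
    have h2 : (0:ℝ) < (n:ℝ)+1 := by positivity
    exact one_div_le_one_div_of_le h2 h1
  have hcauchy : CauchySeq seq := by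
    apply cauchySeq_of_le_tendsto_0 (b := fun N : ℕ => δ⁻¹ * Real.sqrt (1/(N+1)))
    · intro n m N hn hm
      rw [dist_eq_norm]
      rcases le_total n m with h | h
      · calc ‖seq n - seq m‖ = ‖T (1/(m+1)) - T (1/(n+1))‖ := by
              rw [hseqdef]; exact norm_sub_rev _ _
          _ ≤ δ⁻¹ * Real.sqrt (1/(n+1)) := hTdiff _ _ (hspos m) (hsmono h)
          _ ≤ δ⁻¹ * Real.sqrt (1/(N+1)) :=
              mul_le_mul_of_nonneg_left (Real.sqrt_le_sqrt (hsmono hn)) hδinv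
      · calc ‖seq n - seq m‖ = ‖T (1/(n+1)) - T (1/(m+1))‖ := by rw [hseqdef]
          _ ≤ δ⁻¹ * Real.sqrt (1/(m+1)) := hTdiff _ _ (hspos n) (hsmono h)
          _ ≤ δ⁻¹ * Real.sqrt (1/(N+1)) :=
              mul_le_mul_of_nonneg_left (Real.sqrt_le_sqrt (hsmono hm)) hδinv
    · have h1 : Tendsto (fun N : ℕ => (1:ℝ)/(N+1)) atTop (𝓝 0) :=
        tendsto_one_div_add_atTop_nhds_zero_nat
      have h2 : Tendsto (fun N : ℕ => Real.sqrt (1/(N+1))) atTop (𝓝 (Real.sqrt 0)) :=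
        (Real.continuous_sqrt.tendsto 0).comp h1
      rw [Real.sqrt_zero] at h2
      have h4 := h2.const_mul δ⁻¹
      rw [mul_zero] at h4
      exact h4
  obtain ⟨τ, hτ⟩ := cauchySeq_tendsto_of_complete hcauchy
  have hτlim : Tendsto (fun n => star (seq n) * (c : A⁺¹) * seq n) atTop
      (𝓝 (star τ * (c : A⁺¹) * τ)) := (hτ.star.mul tendsto_const_nhds).mul hτ
  have hτlim2 : Tendsto (fun n => star (seq n) * (c : A⁺¹) * seq n) atTop (𝓝 e') := by
    have hz : Tendsto (fun n => e' - star (seq n) * (c : A⁺¹) * seq n) atTop (𝓝 0) := by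
      have hb : ∀ n : ℕ, ‖e' - star (seq n) * (c : A⁺¹) * seq n‖ ≤ δ⁻¹ * (1/(n+1)) := by
        intro n
        simp only [hseqdef]
        exact hbound2 (1/(n+1)) (hspos n)
      have hlim0 := tendsto_one_div_add_atTop_nhds_zero_nat.const_mul δ⁻¹
      rw [mul_zero] at hlim0
      exact squeeze_zero_norm hb hlim0
    have h4 := (tendsto_const_nhds : Tendsto (fun _ : ℕ => e') atTop (𝓝 e')).sub hz
    simpa using h4
  have heqlim : star τ * (c : A⁺¹) * τ = e' := tendsto_nhds_unique hτlim hτlim2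
  -- pull everything back to A
  have hx_inr : ((cfcₙ fx a : A) : A⁺¹) = x := by
    rw [hxdef]
    exact Unitization.real_cfcₙ_eq_cfc_inr a fx (by
      simp only [hfxdef]
      rw [max_eq_right (by linarith : (0:ℝ) - ε₁ ≤ 0), Real.sqrt_zero])
  have hE_inr : ((cfcₙ fE a : A) : A⁺¹) = E := by
    rw [hEdef]
    exact Unitization.real_cfcₙ_eq_cfc_inr a fE (by
      simp only [hfEdef]
      rw [max_eq_right (by linarith : (0:ℝ) - ε ≤ 0), Real.sqrt_zero])
  have he'_inr : ((cut a ε : A) : A⁺¹) = e' := by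
    rw [he'def]
    exact Unitization.real_cfcₙ_eq_cfc_inr a fe (by
      simp only [hfedef]
      rw [max_eq_right (by linarith : (0:ℝ) - ε ≤ 0)])
  have hfstx : (x : A⁺¹).fst = 0 := by
    rw [← hx_inr]; exact Unitization.fst_inr ℂ _
  have hfstE : (E : A⁺¹).fst = 0 := by
    rw [← hE_inr]; exact Unitization.fst_inr ℂ _
  have hfst : ∀ n, (seq n).fst = 0 := by
    intro n
    simp only [hseqdef, hTdef]
    simp [Unitization.fst_mul, hfstx, hfstE]
  set tA : ℕ → A := fun n => (seq n).snd with htAdef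
  have hseq_inr : ∀ n, ((tA n : A) : A⁺¹) = seq n := by
    intro n
    conv_rhs => rw [← Unitization.inl_fst_add_inr_snd_eq (seq n)]
    rw [hfst n]
    simp
    rfl
  have hcauchyA : CauchySeq tA := by
    rw [Metric.cauchySeq_iff] at hcauchy ⊢
    intro θ hθ
    obtain ⟨N, hN⟩ := hcauchy θ hθ
    refine ⟨N, fun m hm n hn => ?_⟩
    have h5 := hN m hm n hn
    rw [dist_eq_norm] at h5 ⊢
    rw [← hseq_inr m, ← hseq_inr n, ← Unitization.inr_sub ℂ, Unitization.norm_inr] at h5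
    exact h5
  obtain ⟨tlim, htlim⟩ := cauchySeq_tendsto_of_complete hcauchyA
  have hτ2 : Tendsto seq atTop (𝓝 ((tlim : A) : A⁺¹)) := by
    have h6 : Tendsto (fun n => ((tA n : A) : A⁺¹)) atTop (𝓝 ((tlim : A) : A⁺¹)) :=
      ((Unitization.isometry_inr (𝕜 := ℂ) (A := A)).continuous.tendsto tlim).comp htlim
    rwa [show (fun n => ((tA n : A) : A⁺¹)) = seq from funext hseq_inr] at h6
  have hτeq : τ = ((tlim : A) : A⁺¹) := tendsto_nhds_unique hτ hτ2
  refine ⟨tlim, ?_⟩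
  have final : ((star tlim * c * tlim : A) : A⁺¹) = ((cut a ε : A) : A⁺¹) := by
    rw [he'_inr, ← heqlim, hτeq]
    simp [Unitization.inr_mul, Unitization.inr_star]
  exact (Unitization.inr_injective (R := ℂ) final).symm

private lemma cut_norm (a : A) (ha : 0 ≤ a) {s : ℝ} (hs : 0 < s) : ‖cut a s - a‖ ≤ s := by
  have hsa : IsSelfAdjoint a := .of_nonneg ha
  have hfc : ContinuousOn (fun t : ℝ => max (t - s) 0) (quasispectrum ℝ a) :=
    ((continuous_id.sub continuous_const).max continuous_const).continuousOn
  have h1 : cfcₙ (fun t : ℝ => max (t - s) 0 - t) a = cut a s - a := by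
    rw [cfcₙ_sub (fun t : ℝ => max (t - s) 0) (fun t : ℝ => t) a hfc
      (by show max ((0:ℝ) - s) 0 = 0; exact max_eq_right (by linarith)) (continuousOn_id' _) rfl,
      cfcₙ_id' ℝ a hsa]
    rfl
  rw [← h1]
  refine norm_cfcₙ_le ?_
  intro t ht
  have ht0 : 0 ≤ t := quasispectrum_nonneg_of_nonneg a ha t ht
  rw [Real.norm_eq_abs, abs_le]
  rcases le_total t s with h | h
  · rw [max_eq_right (by linarith : t - s ≤ 0)]
    constructor <;> linarith
  · rw [max_eq_left (by linarith : (0:ℝ) ≤ t - s)]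
    constructor <;> linarith


theorem stmt_10 (a b : A) (ha : 0 ≤ a) (hb : 0 ≤ b) :
    CuntzLE a b ↔ ∀ ε : ℝ, 0 < ε → ∃ v : A, cut a ε = star v * b * v := by
  constructor
  · rintro ⟨v, hv⟩ ε hε
    obtain ⟨n, hn⟩ := (hv.eventually (gt_mem_nhds hε)).exists
    have hc : (0:A) ≤ star (v n) * b * v n := star_left_conjugate_nonneg hb (v n)
    have hρ : ‖a - star (v n) * b * v n‖ < ε := by
      rw [norm_sub_rev]; exact hn
    obtain ⟨t, ht⟩ := norm_lemma a (star (v n) * b * v n) ha hc hρ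
    refine ⟨v n * t, ?_⟩
    rw [ht, star_mul]
    simp only [mul_assoc]
  · intro h
    refine ⟨fun n => Classical.choose (h (1/(n+1)) (by positivity)), ?_⟩
    have key : ∀ n : ℕ,
        ‖star (Classical.choose (h (1/(n+1)) (by positivity))) * b *
          Classical.choose (h (1/(n+1)) (by positivity)) - a‖ ≤ 1/(n+1) := by
      intro n
      rw [← Classical.choose_spec (h (1/(n+1)) (by positivity))]
      exact cut_norm a ha (by positivity)
    exact squeeze_zero_norm (fun n => by simpa using key n)
      tendsto_one_div_add_atTop_nhds_zero_nat
end

section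
/- Let A be a C*-algebra and let v ∈ A. Then there is a *-isomorphism φ from the hereditary C*-subalgebra her(v*v) onto the hereditary C*-subalgebra her(vv*) such that every positive element z of her(v*v) is Cuntz equivalent in A to φ(z). -/
open Filter Topology

variable {A : Type*} [NonUnitalCStarAlgebra A] [PartialOrder A] [StarOrderedRing A]

set_option synthInstance.maxHeartbeats 1000000
set_option maxHeartbeats 1000000
set_option linter.unusedSectionVars false

open Unitization Set

namespace Stmt14

lemma tendsto_of_norm_sub_le {E : Type*} [NormedAddCommGroup E] {f : ℕ → E} {L : E} {a : ℕ → ℝ}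
    (h : ∀ n, ‖f n - L‖ ≤ a n) (ha : Tendsto a atTop (𝓝 0)) : Tendsto f atTop (𝓝 L) := by
  have h0 : Tendsto (fun n => f n - L) atTop (𝓝 0) := squeeze_zero_norm h ha
  have := h0.add (tendsto_const_nhds (x := L))
  simpa using this

lemma norm_sub_tendsto {E : Type*} [NormedAddCommGroup E] {f : ℕ → E} {L : E}
    (h : Tendsto f atTop (𝓝 L)) : Tendsto (fun n => ‖f n - L‖) atTop (𝓝 0) := by
  have := (h.sub (tendsto_const_nhds (x := L))).norm
  simpa using this

private lemma sqrt_sub_sqrt_le {t e : ℝ} (ht : 0 ≤ t) (he : 0 ≤ e) :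
    Real.sqrt (t + e) - Real.sqrt t ≤ Real.sqrt e := by
  have h : Real.sqrt (t + e) ≤ Real.sqrt t + Real.sqrt e := by
    have h2 : t + e ≤ (Real.sqrt t + Real.sqrt e) ^ 2 := by
      rw [add_sq, Real.sq_sqrt ht, Real.sq_sqrt he]
      nlinarith [Real.sqrt_nonneg t, Real.sqrt_nonneg e]
    calc Real.sqrt (t + e) ≤ Real.sqrt ((Real.sqrt t + Real.sqrt e) ^ 2) :=
          Real.sqrt_le_sqrt h2
      _ = Real.sqrt t + Real.sqrt e := by
          rw [Real.sqrt_sq (by positivity)]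
  linarith

private lemma key_ineq1 {t e : ℝ} (ht : 0 ≤ t) (he : 0 < e) :
    |t * (Real.sqrt (t + e))⁻¹ - Real.sqrt t| ≤ Real.sqrt e := by
  have hpos : 0 < Real.sqrt (t + e) := Real.sqrt_pos.mpr (by linarith)
  have hst : Real.sqrt t ≤ Real.sqrt (t + e) := Real.sqrt_le_sqrt (by linarith)
  have ht' : t * (Real.sqrt (t + e))⁻¹ ≤ Real.sqrt t := by
    rw [mul_inv_le_iff₀ hpos]
    calc t = Real.sqrt t * Real.sqrt t := (Real.mul_self_sqrt ht).symm
      _ ≤ Real.sqrt t * Real.sqrt (t + e) := by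
          exact mul_le_mul_of_nonneg_left hst (Real.sqrt_nonneg t)
  have hdiff : Real.sqrt t - t * (Real.sqrt (t + e))⁻¹ ≤ Real.sqrt e := by
    have expand : Real.sqrt t - t * (Real.sqrt (t + e))⁻¹
        = Real.sqrt t * (Real.sqrt (t + e) - Real.sqrt t) * (Real.sqrt (t + e))⁻¹ := by
      field_simp
      rw [mul_comm (Real.sqrt t), mul_sub, Real.mul_self_sqrt ht]
      ring
    rw [expand]
    have h1 : Real.sqrt t * (Real.sqrt (t + e))⁻¹ ≤ 1 := by
      rw [mul_inv_le_iff₀ hpos, one_mul]; exact hst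
    have h2 : 0 ≤ Real.sqrt (t + e) - Real.sqrt t := by linarith
    calc Real.sqrt t * (Real.sqrt (t + e) - Real.sqrt t) * (Real.sqrt (t + e))⁻¹
        = (Real.sqrt t * (Real.sqrt (t + e))⁻¹) * (Real.sqrt (t + e) - Real.sqrt t) := by ring
      _ ≤ 1 * (Real.sqrt (t + e) - Real.sqrt t) := by
          exact mul_le_mul_of_nonneg_right (by exact h1) h2
      _ = Real.sqrt (t + e) - Real.sqrt t := one_mul _
      _ ≤ Real.sqrt e := sqrt_sub_sqrt_le ht he.le
  rw [abs_le]
  constructor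
  · have := Real.sqrt_nonneg e; linarith
  · have h0 : 0 ≤ t * (Real.sqrt (t + e))⁻¹ := by positivity
    have := Real.sqrt_nonneg e; linarith

private lemma key_ineq2 {t e M : ℝ} (ht : 0 ≤ t) (htM : t ≤ M) (he : 0 < e) :
    |t * (Real.sqrt (t + e))⁻¹ * Real.sqrt t - t| ≤ Real.sqrt M * Real.sqrt e := by
  have h1 := key_ineq1 ht he
  have heq : t * (Real.sqrt (t + e))⁻¹ * Real.sqrt t - t
      = (t * (Real.sqrt (t + e))⁻¹ - Real.sqrt t) * Real.sqrt t := by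
    rw [sub_mul, Real.mul_self_sqrt ht]
  rw [heq, abs_mul, abs_of_nonneg (Real.sqrt_nonneg t)]
  have hsM : Real.sqrt t ≤ Real.sqrt M := Real.sqrt_le_sqrt htM
  calc |t * (Real.sqrt (t + e))⁻¹ - Real.sqrt t| * Real.sqrt t
      ≤ Real.sqrt e * Real.sqrt M :=
        mul_le_mul h1 hsM (Real.sqrt_nonneg t) (Real.sqrt_nonneg e)
    _ = Real.sqrt M * Real.sqrt e := mul_comm _ _


lemma inr_snd_of_fst_eq_zero {p : Unitization ℂ A} (h : p.fst = 0) :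
    (↑p.snd : Unitization ℂ A) = p := by
  conv_rhs => rw [← Unitization.inl_fst_add_inr_snd_eq p]
  rw [h, Unitization.inl_zero, zero_add]

lemma tendsto_inr_iff {x : ℕ → A} {L : A} :
    Tendsto x atTop (𝓝 L) ↔
      Tendsto (fun n => (x n : Unitization ℂ A)) atTop (𝓝 (L : Unitization ℂ A)) :=
  (Unitization.isometry_inr (𝕜 := ℂ) (A := A)).isEmbedding.tendsto_nhds_iff

noncomputable section

variable (v : A)

def al : Unitization ℂ A := (↑(star v * v) : Unitization ℂ A)
-- assume al_eq, al_star, al_isSelfAdjoint, al_spectrum_nonneg, al_spectrum_subset,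
-- al_star_spectrum_subset, swap_cfc from previous part (will merge)
lemma al_eq : al v = star (v : Unitization ℂ A) * v := by simp [al]
lemma al_star : al (star v) = (v : Unitization ℂ A) * star (v : Unitization ℂ A) := by simp [al]
lemma al_isSelfAdjoint : IsSelfAdjoint (al v) := by
  rw [al_eq]; exact IsSelfAdjoint.star_mul_self _
lemma al_spectrum_nonneg : ∀ t ∈ spectrum ℝ (al v), 0 ≤ t := by
  rw [al_eq]; exact spectrum_star_mul_self_nonneg

def eps (n : ℕ) : ℝ := (n + 1 : ℝ)⁻¹

lemma eps_pos (n : ℕ) : 0 < eps n := by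
  have h : (0:ℝ) < (n:ℝ) + 1 := by positivity
  simpa [eps] using inv_pos.mpr h

lemma sqrt_eps_tendsto : Tendsto (fun n => Real.sqrt (eps n)) atTop (𝓝 0) := by
  have h1 : Tendsto eps atTop (𝓝 0) := tendsto_one_div_add_atTop_nhds_zero_nat.congr
    (fun n => by rw [eps, one_div])
  have := (Real.continuous_sqrt.tendsto 0).comp h1
  simpa [Function.comp_def] using this

def fn (n : ℕ) : ℝ → ℝ := fun t => (Real.sqrt (t + eps n))⁻¹

lemma fn_contOn (n : ℕ) (s : Set ℝ) (hs : s ⊆ Set.Ici 0) : ContinuousOn (fn n) s := by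
  refine ContinuousOn.inv₀ ?_ ?_
  · exact (Real.continuous_sqrt.comp (continuous_add_right (eps n))).continuousOn
  · intro t ht
    have h0 : (0:ℝ) < t + eps n := by
      have := hs ht
      have := eps_pos n
      simp only [Set.mem_Ici] at *
      linarith
    exact ne_of_gt (Real.sqrt_pos.mpr h0)

def Rn (n : ℕ) : Unitization ℂ A := cfc (fn n) (al v)

def wn (n : ℕ) : Unitization ℂ A := (v : Unitization ℂ A) * Rn v n

def cn (n : ℕ) : Unitization ℂ A := cfc (fun t => t * fn n t) (al v)

def sa : Unitization ℂ A := cfc Real.sqrt (al v)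

def Tn (n : ℕ) (x : A) : A := (wn v n * (x : Unitization ℂ A) * star (wn v n)).snd

lemma al_spectrum_subset : spectrum ℝ (al v) ⊆ Set.Icc 0 (‖v‖ ^ 2) := by
  intro t ht
  refine ⟨al_spectrum_nonneg v t ht, ?_⟩
  have h1 : ‖t‖ ≤ ‖al v‖ := spectrum.norm_le_norm_of_mem ht
  rw [al, Unitization.norm_inr] at h1
  have h2 : ‖star v * v‖ = ‖v‖ * ‖v‖ := CStarRing.norm_star_mul_self
  calc t ≤ ‖t‖ := le_abs_self t
    _ ≤ ‖v‖ ^ 2 := by rw [sq]; rw [h2] at h1; exact h1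

lemma spec_sub_Ici : spectrum ℝ (al v) ⊆ Set.Ici 0 := fun t ht => al_spectrum_nonneg v t ht

lemma fn_contOn_spec (n : ℕ) : ContinuousOn (fn n) (spectrum ℝ (al v)) :=
  fn_contOn n _ (spec_sub_Ici v)

lemma Rn_selfAdjoint (n : ℕ) : IsSelfAdjoint (Rn v n) := cfc_predicate _ _

lemma sa_selfAdjoint : IsSelfAdjoint (sa v) := cfc_predicate _ _

lemma Rn_mul_al (n : ℕ) : Rn v n * al v = cn v n := by
  rw [cn, show (fun t : ℝ => t * fn n t) = (fun t => fn n t * id t) from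
    funext fun t => mul_comm _ _,
    cfc_mul (fn n) id (al v) (fn_contOn_spec v n) (by fun_prop),
    cfc_id ℝ (al v) (al_isSelfAdjoint v), Rn]

lemma al_mul_Rn (n : ℕ) : al v * Rn v n = cn v n := by
  rw [cn, show (fun t : ℝ => t * fn n t) = (fun t => id t * fn n t) from rfl,
    cfc_mul id (fn n) (al v) (by fun_prop) (fn_contOn_spec v n),
    cfc_id ℝ (al v) (al_isSelfAdjoint v), Rn]

lemma star_wn (n : ℕ) : star (wn v n) = Rn v n * star (v : Unitization ℂ A) := by
  rw [wn, star_mul, (Rn_selfAdjoint v n).star_eq]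

lemma norm_wn_le (n : ℕ) : ‖wn v n‖ ≤ 1 := by
  have hs : star (wn v n) * wn v n = cfc (fun t => fn n t * t * fn n t) (al v) := by
    rw [star_wn, wn, mul_assoc, ← mul_assoc (star (v : Unitization ℂ A)), ← al_eq,
      ← mul_assoc, Rn_mul_al]
    rw [cn, Rn, ← cfc_mul _ _ (al v)
      (by exact (continuousOn_id.mul (fn_contOn_spec v n))) (fn_contOn_spec v n)]
    exact cfc_congr fun t _ => by ring
  have hb : ‖star (wn v n) * wn v n‖ ≤ 1 := by
    rw [hs]
    refine norm_cfc_le zero_le_one fun t ht => ?_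
    have ht0 : 0 ≤ t := al_spectrum_nonneg v t ht
    have hpos : 0 < t + eps n := by have := eps_pos n; linarith
    have : fn n t * t * fn n t = t / (t + eps n) := by
      rw [fn, div_eq_mul_inv, ← Real.sqrt_mul_self hpos.le]
      field_simp
      rw [Real.sq_sqrt (Real.sqrt_nonneg _)]
    rw [Real.norm_eq_abs, this, abs_of_nonneg (by positivity)]
    rw [div_le_one hpos]
    have := eps_pos n; linarith
  have := CStarRing.norm_star_mul_self (x := wn v n)
  nlinarith [norm_nonneg (wn v n)]

lemma fst_inr_mul_inr {x : A} (p q : Unitization ℂ A) :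
    (p * (x : Unitization ℂ A) * q).fst = 0 := by
  simp [Unitization.fst_mul]

lemma inr_Tn (n : ℕ) (x : A) :
    (↑(Tn v n x) : Unitization ℂ A) = wn v n * (x : Unitization ℂ A) * star (wn v n) :=
  inr_snd_of_fst_eq_zero (fst_inr_mul_inr _ _)

lemma Tn_norm_le (n : ℕ) (x : A) : ‖Tn v n x‖ ≤ ‖x‖ := by
  have h : ‖(↑(Tn v n x) : Unitization ℂ A)‖ ≤ ‖x‖ := by
    rw [inr_Tn]
    calc ‖wn v n * (x : Unitization ℂ A) * star (wn v n)‖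
        ≤ ‖wn v n * (x : Unitization ℂ A)‖ * ‖star (wn v n)‖ := norm_mul_le _ _
      _ ≤ ‖wn v n‖ * ‖(x : Unitization ℂ A)‖ * ‖star (wn v n)‖ := by
          gcongr; exact norm_mul_le _ _
      _ ≤ 1 * ‖(x : Unitization ℂ A)‖ * 1 := by
          gcongr
          · exact norm_wn_le v n
          · rw [norm_star]; exact norm_wn_le v n
      _ = ‖x‖ := by rw [one_mul, mul_one, Unitization.norm_inr]
  rwa [Unitization.norm_inr] at h

lemma Tn_add (n : ℕ) (x y : A) : Tn v n (x + y) = Tn v n x + Tn v n y := by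
  apply Unitization.inr_injective (R := ℂ)
  rw [Unitization.inr_add, inr_Tn, inr_Tn, inr_Tn, Unitization.inr_add]
  noncomm_ring

lemma Tn_sub (n : ℕ) (x y : A) : Tn v n (x - y) = Tn v n x - Tn v n y := by
  apply Unitization.inr_injective (R := ℂ)
  rw [Unitization.inr_sub, inr_Tn, inr_Tn, inr_Tn, Unitization.inr_sub]
  noncomm_ring

lemma Tn_smul (n : ℕ) (c : ℂ) (x : A) : Tn v n (c • x) = c • Tn v n x := by
  apply Unitization.inr_injective (R := ℂ)
  rw [Unitization.inr_smul, inr_Tn, inr_Tn, Unitization.inr_smul]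
  rw [mul_smul_comm, smul_mul_assoc]

lemma Tn_star (n : ℕ) (x : A) : Tn v n (star x) = star (Tn v n x) := by
  apply Unitization.inr_injective (R := ℂ)
  rw [Unitization.inr_star, inr_Tn, inr_Tn, Unitization.inr_star]
  simp only [star_mul, star_star, mul_assoc]

lemma cn_sub_sa_norm (n : ℕ) : ‖cn v n - sa v‖ ≤ Real.sqrt (eps n) := by
  rw [cn, sa, ← cfc_sub _ _ (al v)
    (by exact continuousOn_id.mul (fn_contOn_spec v n)) Real.continuous_sqrt.continuousOn]
  refine norm_cfc_le (Real.sqrt_nonneg _) fun t ht => ?_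
  have ht0 : 0 ≤ t := al_spectrum_nonneg v t ht
  rw [Real.norm_eq_abs]
  exact key_ineq1 ht0 (eps_pos n)

lemma cn_tendsto : Tendsto (fun n => cn v n) atTop (𝓝 (sa v)) :=
  tendsto_of_norm_sub_le (cn_sub_sa_norm v) sqrt_eps_tendsto

lemma Tn_dense (n : ℕ) (y : A) :
    (↑(Tn v n (star v * v * y * (star v * v))) : Unitization ℂ A)
      = (v : Unitization ℂ A) * cn v n * (y : Unitization ℂ A)
          * (cn v n * star (v : Unitization ℂ A)) := by
  rw [inr_Tn]
  have h : ((star v * v * y * (star v * v) : A) : Unitization ℂ A)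
      = al v * (y : Unitization ℂ A) * al v := by
    simp only [Unitization.inr_mul, al]
  rw [h, star_wn, wn]
  nth_rewrite 2 [← al_mul_Rn v n]
  rw [← Rn_mul_al v n]
  noncomm_ring

def LL (y : A) : Unitization ℂ A :=
  (v : Unitization ℂ A) * sa v * (y : Unitization ℂ A) * (sa v * star (v : Unitization ℂ A))

lemma LL_fst (y : A) : (LL v y).fst = 0 := by
  simp [LL, Unitization.fst_mul]

lemma Tn_tendsto_dense (y : A) :
    Tendsto (fun n => (↑(Tn v n (star v * v * y * (star v * v))) : Unitization ℂ A))
      atTop (𝓝 (LL v y)) := by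
  have h := ((tendsto_const_nhds (x := (v : Unitization ℂ A))).mul (cn_tendsto v)).mul
    (tendsto_const_nhds (x := (y : Unitization ℂ A))) |>.mul
    ((cn_tendsto v).mul (tendsto_const_nhds (x := star (v : Unitization ℂ A))))
  rw [show (fun n => (↑(Tn v n (star v * v * y * (star v * v))) : Unitization ℂ A))
    = fun n => (v : Unitization ℂ A) * cn v n * (y : Unitization ℂ A)
        * (cn v n * star (v : Unitization ℂ A)) from funext fun n => Tn_dense v n y]
  exact h

lemma exists_tendsto {x : A} (hx : x ∈ her (star v * v)) :
    ∃ L : A, Tendsto (fun n => Tn v n x) atTop (𝓝 L) := by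
  refine cauchySeq_tendsto_of_complete ?_
  rw [Metric.cauchySeq_iff]
  intro ε hε
  obtain ⟨z, hz, hdz⟩ := Metric.mem_closure_iff.mp hx (ε/4) (by positivity)
  obtain ⟨y, rfl⟩ := hz
  have hconv : Tendsto (fun n => Tn v n (star v * v * y * (star v * v))) atTop
      (𝓝 ((LL v y).snd)) := by
    rw [tendsto_inr_iff, inr_snd_of_fst_eq_zero (LL_fst v y)]
    exact Tn_tendsto_dense v y
  obtain ⟨N, hN⟩ := Metric.cauchySeq_iff.mp hconv.cauchySeq (ε/4) (by positivity)
  refine ⟨N, fun m hm n hn => ?_⟩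
  have key : ∀ k, dist (Tn v k x) (Tn v k (star v * v * y * (star v * v))) ≤ ε/4 := by
    intro k
    rw [dist_eq_norm, ← Tn_sub]
    calc ‖Tn v k (x - star v * v * y * (star v * v))‖
        ≤ ‖x - star v * v * y * (star v * v)‖ := Tn_norm_le v k _
      _ ≤ ε/4 := by rw [← dist_eq_norm]; exact hdz.le
  calc dist (Tn v m x) (Tn v n x)
      ≤ dist (Tn v m x) (Tn v m (star v * v * y * (star v * v)))
        + dist (Tn v m (star v * v * y * (star v * v)))
            (Tn v n (star v * v * y * (star v * v)))
        + dist (Tn v n (star v * v * y * (star v * v))) (Tn v n x) :=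
        dist_triangle4 _ _ _ _
    _ ≤ ε/4 + ε/4 + ε/4 := by
        refine add_le_add (add_le_add (key m) (hN m hm n hn).le) ?_
        rw [dist_comm]; exact key n
    _ < ε := by linarith

def phi (x : A) : A := limUnder atTop (fun n => Tn v n x)

lemma phi_spec {x : A} (hx : x ∈ her (star v * v)) :
    Tendsto (fun n => Tn v n x) atTop (𝓝 (phi v x)) := by
  obtain ⟨L, hL⟩ := exists_tendsto v hx
  rw [phi, hL.limUnder_eq]
  exact hL

lemma mem_her_dense (y : A) : star v * v * y * (star v * v) ∈ her (star v * v) :=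
  subset_closure ⟨y, rfl⟩

lemma phi_dense (y : A) :
    (↑(phi v (star v * v * y * (star v * v))) : Unitization ℂ A) = LL v y := by
  have h1 := (tendsto_inr_iff).mp (phi_spec v (mem_her_dense v y))
  exact tendsto_nhds_unique h1 (Tn_tendsto_dense v y)

lemma phi_add {x y : A} (hx : x ∈ her (star v * v)) (hy : y ∈ her (star v * v)) :
    phi v (x + y) = phi v x + phi v y := by
  have h : Tendsto (fun n => Tn v n (x + y)) atTop (𝓝 (phi v x + phi v y)) := by
    have := (phi_spec v hx).add (phi_spec v hy)
    simpa [Tn_add] using this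
  exact h.limUnder_eq

lemma phi_smul (c : ℂ) {x : A} (hx : x ∈ her (star v * v)) :
    phi v (c • x) = c • phi v x := by
  have h : Tendsto (fun n => Tn v n (c • x)) atTop (𝓝 (c • phi v x)) := by
    have := (phi_spec v hx).const_smul c
    simpa [Tn_smul] using this
  exact h.limUnder_eq

lemma phi_star {x : A} (hx : x ∈ her (star v * v)) :
    phi v (star x) = star (phi v x) := by
  have h : Tendsto (fun n => Tn v n (star x)) atTop (𝓝 (star (phi v x))) := by
    have : Tendsto (fun n => star (Tn v n x)) atTop (𝓝 (star (phi v x))) :=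
      (continuous_star.tendsto _).comp (phi_spec v hx)
    simpa [Tn_star] using this
  exact h.limUnder_eq

lemma phi_lip {x y : A} (hx : x ∈ her (star v * v)) (hy : y ∈ her (star v * v)) :
    ‖phi v x - phi v y‖ ≤ ‖x - y‖ := by
  have h := ((phi_spec v hx).sub (phi_spec v hy)).norm
  refine le_of_tendsto h (Eventually.of_forall fun n => ?_)
  rw [← Tn_sub]
  exact Tn_norm_le v n (x - y)

lemma phi_tendsto {u : ℕ → A} {x : A} (hu : ∀ n, u n ∈ her (star v * v))
    (hx : x ∈ her (star v * v)) (h : Tendsto u atTop (𝓝 x)) :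
    Tendsto (fun n => phi v (u n)) atTop (𝓝 (phi v x)) := by
  refine tendsto_of_norm_sub_le (fun n => ?_) (norm_sub_tendsto h)
  exact phi_lip v (hu n) hx

lemma al_star_spectrum_subset : spectrum ℝ (al (star v)) ⊆ Set.Icc 0 (‖v‖ ^ 2) := by
  have := al_spectrum_subset (star v)
  rwa [norm_star] at this

lemma swap_pow (n : ℕ) : (v : Unitization ℂ A) * (al v) ^ n = (al (star v)) ^ n * v := by
  induction n with
  | zero => simp
  | succ n ih =>
      rw [pow_succ, ← mul_assoc, ih, pow_succ]
      have : (v : Unitization ℂ A) * al v = al (star v) * v := by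
        rw [al_eq, al_star, ← mul_assoc]
      rw [mul_assoc, this, ← mul_assoc]

lemma swap_poly (p : Polynomial ℝ) :
    (v : Unitization ℂ A) * Polynomial.aeval (al v) p
      = Polynomial.aeval (al (star v)) p * v := by
  induction p using Polynomial.induction_on' with
  | add p q hp hq => simp [map_add, mul_add, add_mul, hp, hq]
  | monomial n c =>
      simp only [Polynomial.aeval_monomial]
      rw [← mul_assoc, ← Algebra.commutes c ((v : Unitization ℂ A)), mul_assoc,
        swap_pow, ← mul_assoc]

lemma swap_cfc (g : ℝ → ℝ) (hg : ContinuousOn g (Set.Icc 0 (‖v‖ ^ 2))) :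
    (v : Unitization ℂ A) * cfc g (al v) = cfc g (al (star v)) * v := by
  have hsa := al_isSelfAdjoint v
  have hsb := al_isSelfAdjoint (star v)
  have hga : ContinuousOn g (spectrum ℝ (al v)) := hg.mono (al_spectrum_subset v)
  have hgb : ContinuousOn g (spectrum ℝ (al (star v))) := hg.mono (al_star_spectrum_subset v)
  rw [← sub_eq_zero, ← norm_le_zero_iff]
  refine le_of_forall_pos_le_add ?_
  intro ε hε
  rw [zero_add]
  obtain ⟨p, hp⟩ := exists_polynomial_near_of_continuousOn 0 (‖v‖ ^ 2) g hg
    (ε / (2 * ‖(v : Unitization ℂ A)‖ + 1)) (by positivity)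
  have hVnn : (0:ℝ) ≤ ‖(v : Unitization ℂ A)‖ := norm_nonneg _
  set δ := ε / (2 * ‖(v : Unitization ℂ A)‖ + 1) with hδ
  have hδ0 : 0 < δ := by positivity
  have hb1 : ‖cfc g (al v) - cfc (fun t => p.eval t) (al v)‖ ≤ δ := by
    rw [← cfc_sub _ _ (al v) hga (by fun_prop)]
    refine norm_cfc_le hδ0.le fun t ht => ?_
    have := hp t (al_spectrum_subset v ht)
    rw [Real.norm_eq_abs, abs_sub_comm]
    exact (le_of_lt this)
  have hb2 : ‖cfc g (al (star v)) - cfc (fun t => p.eval t) (al (star v))‖ ≤ δ := by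
    rw [← cfc_sub _ _ (al (star v)) hgb (by fun_prop)]
    refine norm_cfc_le hδ0.le fun t ht => ?_
    have := hp t (al_star_spectrum_subset v ht)
    rw [Real.norm_eq_abs, abs_sub_comm]
    exact (le_of_lt this)
  have hpoly : (v : Unitization ℂ A) * cfc (fun t => p.eval t) (al v)
      = cfc (fun t => p.eval t) (al (star v)) * v := by
    rw [cfc_polynomial p (al v) hsa, cfc_polynomial p (al (star v)) hsb]
    exact swap_poly v p
  calc ‖(v : Unitization ℂ A) * cfc g (al v) - cfc g (al (star v)) * v‖
      = ‖(v : Unitization ℂ A) * (cfc g (al v) - cfc (fun t => p.eval t) (al v))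
          - (cfc g (al (star v)) - cfc (fun t => p.eval t) (al (star v))) * v‖ := by
        congr 1
        rw [mul_sub, sub_mul, hpoly]
        abel
    _ ≤ ‖(v : Unitization ℂ A) * (cfc g (al v) - cfc (fun t => p.eval t) (al v))‖
          + ‖(cfc g (al (star v)) - cfc (fun t => p.eval t) (al (star v))) * v‖ :=
        norm_sub_le _ _
    _ ≤ ‖(v : Unitization ℂ A)‖ * δ + δ * ‖(v : Unitization ℂ A)‖ := by
        refine add_le_add ?_ ?_
        · exact (norm_mul_le _ _).trans (mul_le_mul_of_nonneg_left hb1 hVnn)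
        · exact (norm_mul_le _ _).trans (mul_le_mul_of_nonneg_right hb2 hVnn)
    _ ≤ ε := by
        have key : (2 * ‖(v : Unitization ℂ A)‖ + 1) * δ = ε := by
          rw [hδ]; field_simp
        nlinarith [hδ0.le, hVnn]

lemma V_al : (v : Unitization ℂ A) * al v = al (star v) * (v : Unitization ℂ A) := by
  rw [al_eq, al_star, ← mul_assoc]

lemma al_Vstar : al v * star (v : Unitization ℂ A)
    = star (v : Unitization ℂ A) * al (star v) := by
  have h := congrArg star (V_al v)
  simp only [star_mul, (al_isSelfAdjoint v).star_eq, (al_isSelfAdjoint (star v)).star_eq] at h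
  exact h

lemma V_cn (n : ℕ) : (v : Unitization ℂ A) * cn v n = al (star v) * wn v n := by
  rw [← al_mul_Rn, ← mul_assoc, V_al, mul_assoc, wn]

lemma cn_Vstar (n : ℕ) : cn v n * star (v : Unitization ℂ A)
    = star (wn v n) * al (star v) := by
  rw [← Rn_mul_al, mul_assoc, al_Vstar, ← mul_assoc, star_wn]

lemma inr_vstarv : ((v * star v : A) : Unitization ℂ A) = al (star v) := by simp [al]

lemma Tn_dense_mem (n : ℕ) (y : A) :
    Tn v n (star v * v * y * (star v * v)) = (v * star v) * Tn v n y * (v * star v) := by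
  apply Unitization.inr_injective (R := ℂ)
  rw [Tn_dense v n y, Unitization.inr_mul, Unitization.inr_mul, inr_Tn, inr_vstarv,
    V_cn, cn_Vstar]
  noncomm_ring

lemma Tn_mapsTo (n : ℕ) : Set.MapsTo (Tn v n) (her (star v * v)) (her (v * star v)) := by
  intro x hx
  have hlip : LipschitzWith 1 (Tn v n) := by
    refine LipschitzWith.of_dist_le_mul fun x y => ?_
    rw [dist_eq_norm, dist_eq_norm, ← Tn_sub, NNReal.coe_one, one_mul]
    exact Tn_norm_le v n (x - y)
  have hx' : x ∈ closure {x : A | ∃ y, x = star v * v * y * (star v * v)} := hx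
  have hmaps : Set.MapsTo (Tn v n) {x : A | ∃ y, x = star v * v * y * (star v * v)}
      {x : A | ∃ y, x = v * star v * y * (v * star v)} := by
    rintro z ⟨y, rfl⟩
    exact ⟨Tn v n y, Tn_dense_mem v n y⟩
  exact map_mem_closure hlip.continuous hx' hmaps

lemma phi_mem {x : A} (hx : x ∈ her (star v * v)) : phi v x ∈ her (v * star v) :=
  isClosed_closure.mem_of_tendsto (phi_spec v hx)
    (Eventually.of_forall fun n => Tn_mapsTo v n hx)

lemma sa_mul_al_mul_sa : sa v * al v * sa v = al v * al v := by
  have h1 : sa v * al v = cfc (fun t => Real.sqrt t * t) (al v) := by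
    rw [show (fun t : ℝ => Real.sqrt t * t) = (fun t : ℝ => Real.sqrt t * id t) from rfl,
      cfc_mul _ _ (al v) Real.continuous_sqrt.continuousOn (by fun_prop),
      cfc_id ℝ (al v) (al_isSelfAdjoint v), sa]
  have h2 : al v * al v = cfc (fun t : ℝ => t * t) (al v) := by
    rw [show (fun t : ℝ => t * t) = (fun t : ℝ => id t * id t) from rfl,
      cfc_mul _ _ (al v) (by fun_prop) (by fun_prop),
      cfc_id ℝ (al v) (al_isSelfAdjoint v)]
  rw [h1, sa, ← cfc_mul _ _ (al v)
    (by exact Real.continuous_sqrt.continuousOn.mul continuousOn_id)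
    Real.continuous_sqrt.continuousOn, h2]
  refine cfc_congr fun t ht => ?_
  have ht0 : 0 ≤ t := al_spectrum_nonneg v t ht
  rw [mul_comm (Real.sqrt t) t, mul_assoc, Real.mul_self_sqrt ht0]

lemma hstar_aux : ∀ z : Unitization ℂ A,
    star (v : Unitization ℂ A) * ((v : Unitization ℂ A) * z) = al v * z := fun z => by
  rw [← mul_assoc, ← al_eq]

lemma LL_mul (y y' : A) :
    LL v y * LL v y' = LL v (y * (star v * v) * (star v * v) * y') := by
  have hsas : ∀ z : Unitization ℂ A,
      sa v * (al v * (sa v * z)) = al v * (al v * z) := fun z => by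
    rw [← mul_assoc, ← mul_assoc, sa_mul_al_mul_sa, mul_assoc]
  have hY : ((y * (star v * (v * (star v * (v * y')))) : A) : Unitization ℂ A)
      = (y : Unitization ℂ A) * (al v * (al v * (y' : Unitization ℂ A))) := by
    simp only [al, Unitization.inr_mul]
    noncomm_ring
  simp only [LL, mul_assoc]
  rw [hY, hstar_aux, hsas]
  simp only [mul_assoc]

lemma phi_mul_dense (y y' : A) :
    phi v ((star v * v * y * (star v * v)) * (star v * v * y' * (star v * v)))
      = phi v (star v * v * y * (star v * v)) * phi v (star v * v * y' * (star v * v)) := by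
  apply Unitization.inr_injective (R := ℂ)
  have hprod : (star v * v * y * (star v * v)) * (star v * v * y' * (star v * v))
      = star v * v * (y * (star v * v) * (star v * v) * y') * (star v * v) := by
    noncomm_ring
  rw [Unitization.inr_mul, phi_dense, phi_dense, hprod, phi_dense]
  exact (LL_mul v y y').symm

lemma phi_mul {x x' : A} (hx : x ∈ her (star v * v)) (hx' : x' ∈ her (star v * v)) :
    phi v (x * x') = phi v x * phi v x' := by
  have hxc : x ∈ closure {x : A | ∃ y, x = star v * v * y * (star v * v)} := hx
  have hxc' : x' ∈ closure {x : A | ∃ y, x = star v * v * y * (star v * v)} := hx'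
  obtain ⟨u, hu, hux⟩ := mem_closure_iff_seq_limit.mp hxc
  obtain ⟨u', hu', hux'⟩ := mem_closure_iff_seq_limit.mp hxc'
  choose y hy using hu
  choose y' hy' using hu'
  have hS : ∀ n, (u n * u' n) ∈ {x : A | ∃ y, x = star v * v * y * (star v * v)} := fun n =>
    ⟨y n * (star v * v) * (star v * v) * y' n, by rw [hy n, hy' n]; noncomm_ring⟩
  have hxx' : x * x' ∈ her (star v * v) :=
    mem_closure_iff_seq_limit.mpr ⟨_, hS, hux.mul hux'⟩
  have h1 : Tendsto (fun n => phi v (u n * u' n)) atTop (𝓝 (phi v (x * x'))) :=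
    phi_tendsto v (fun n => subset_closure (hS n)) hxx' (hux.mul hux')
  have h2 : Tendsto (fun n => phi v (u n) * phi v (u' n)) atTop (𝓝 (phi v x * phi v x')) :=
    (phi_tendsto v (fun n => subset_closure ⟨y n, hy n⟩) hx hux).mul
      (phi_tendsto v (fun n => subset_closure ⟨y' n, hy' n⟩) hx' hux')
  have heq : (fun n => phi v (u n * u' n)) = fun n => phi v (u n) * phi v (u' n) := by
    funext n
    rw [hy n, hy' n]
    exact phi_mul_dense v (y n) (y' n)
  rw [heq] at h1
  exact tendsto_nhds_unique h1 h2

def qn (n : ℕ) : Unitization ℂ A := cfc (fun t => t * fn n t * Real.sqrt t) (al v)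

lemma qn_eq (n : ℕ) : Rn v n * al v * sa v = qn v n := by
  rw [Rn_mul_al, cn, sa, qn, ← cfc_mul _ _ (al v)
    (by exact continuousOn_id.mul (fn_contOn_spec v n)) Real.continuous_sqrt.continuousOn]

lemma qn_eq' (n : ℕ) : sa v * (al v * Rn v n) = qn v n := by
  rw [al_mul_Rn, sa, cn, qn, ← cfc_mul _ _ (al v) Real.continuous_sqrt.continuousOn
    (by exact continuousOn_id.mul (fn_contOn_spec v n))]
  exact cfc_congr fun t _ => by ring

lemma qn_sub_al_norm (n : ℕ) : ‖qn v n - al v‖ ≤ Real.sqrt (‖v‖^2) * Real.sqrt (eps n) := by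
  have hid : al v = cfc (id : ℝ → ℝ) (al v) := (cfc_id ℝ (al v) (al_isSelfAdjoint v)).symm
  rw [qn]
  nth_rewrite 2 [hid]
  rw [← cfc_sub _ _ (al v)
    (by exact (continuousOn_id.mul (fn_contOn_spec v n)).mul Real.continuous_sqrt.continuousOn)
    (by fun_prop)]
  refine norm_cfc_le (by positivity) fun t ht => ?_
  have h := al_spectrum_subset v ht
  rw [Real.norm_eq_abs]
  exact key_ineq2 h.1 h.2 (eps_pos n)

lemma qn_tendsto : Tendsto (fun n => qn v n) atTop (𝓝 (al v)) := by
  refine tendsto_of_norm_sub_le (qn_sub_al_norm v) ?_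
  have := (tendsto_const_nhds (x := Real.sqrt (‖v‖^2))).mul sqrt_eps_tendsto
  simpa using this

lemma Tn_psi_dense (n : ℕ) (y : A) :
    (↑(Tn (star v) n (phi v (star v * v * y * (star v * v)))) : Unitization ℂ A)
      = qn v n * (y : Unitization ℂ A) * qn v n := by
  have hcont : ContinuousOn (fn n) (Set.Icc 0 (‖v‖^2)) := fn_contOn n _ (fun t ht => ht.1)
  have h2 : Rn (star v) n * (v : Unitization ℂ A) = (v : Unitization ℂ A) * Rn v n :=
    (swap_cfc v (fn n) hcont).symm
  have h1 : star (v : Unitization ℂ A) * Rn (star v) n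
      = Rn v n * star (v : Unitization ℂ A) := by
    have h3 := swap_cfc (star v) (fn n) (by rwa [norm_star])
    rw [star_star] at h3
    simp only [Unitization.inr_star] at h3
    exact h3
  have hq1 : ∀ z : Unitization ℂ A, Rn v n * (al v * (sa v * z)) = qn v n * z := fun z => by
    rw [← mul_assoc, ← mul_assoc, qn_eq]
  rw [inr_Tn, phi_dense, LL, star_wn, wn]
  simp only [Unitization.inr_star, star_star]
  rw [h1, h2]
  simp only [mul_assoc]
  rw [hstar_aux, hstar_aux, hq1, qn_eq']

lemma psi_phi_dense (y : A) :
    phi (star v) (phi v (star v * v * y * (star v * v))) = star v * v * y * (star v * v) := by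
  have hmem : phi v (star v * v * y * (star v * v)) ∈ her (star (star v) * star v) := by
    rw [star_star]
    exact phi_mem v (mem_her_dense v y)
  have hspec := phi_spec (star v) hmem
  have htend : Tendsto (fun n => Tn (star v) n (phi v (star v * v * y * (star v * v)))) atTop
      (𝓝 (star v * v * y * (star v * v))) := by
    rw [tendsto_inr_iff]
    have hgoal : ((star v * v * y * (star v * v) : A) : Unitization ℂ A)
        = al v * (y : Unitization ℂ A) * al v := by
      simp only [Unitization.inr_mul, al]
    rw [hgoal, show (fun n => (↑(Tn (star v) n (phi v (star v * v * y * (star v * v))))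
        : Unitization ℂ A)) = fun n => qn v n * (y : Unitization ℂ A) * qn v n from
      funext fun n => Tn_psi_dense v n y]
    exact ((qn_tendsto v).mul tendsto_const_nhds).mul (qn_tendsto v)
  exact tendsto_nhds_unique hspec htend

lemma psi_phi {x : A} (hx : x ∈ her (star v * v)) : phi (star v) (phi v x) = x := by
  have hxc : x ∈ closure {x : A | ∃ y, x = star v * v * y * (star v * v)} := hx
  obtain ⟨u, hu, hux⟩ := mem_closure_iff_seq_limit.mp hxc
  choose y hy using hu
  have humem : ∀ n, u n ∈ her (star v * v) := fun n => subset_closure ⟨y n, hy n⟩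
  have h1 : Tendsto (fun n => phi v (u n)) atTop (𝓝 (phi v x)) :=
    phi_tendsto v humem hx hux
  have h2 : Tendsto (fun n => phi (star v) (phi v (u n))) atTop
      (𝓝 (phi (star v) (phi v x))) := by
    refine phi_tendsto (star v) (fun n => ?_) ?_ h1
    · rw [star_star]; exact phi_mem v (humem n)
    · rw [star_star]; exact phi_mem v hx
  have heq : (fun n => phi (star v) (phi v (u n))) = u := by
    funext n
    rw [hy n]
    exact psi_phi_dense v (y n)
  rw [heq] at h2
  exact tendsto_nhds_unique h2 hux

lemma cuntz_aux1 {z : A} (hz : z ∈ her (star v * v)) : CuntzLE (phi v z) z := by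
  refine ⟨fun n => (star (wn v n)).snd, ?_⟩
  have hweq : ∀ n, star ((star (wn v n)).snd) * z * ((star (wn v n)).snd) = Tn v n z := by
    intro n
    apply Unitization.inr_injective (R := ℂ)
    have hfst : (star (wn v n)).fst = 0 := by
      simp [wn, Unitization.fst_mul, Unitization.fst_star]
    have hinr : (((star (wn v n)).snd : A) : Unitization ℂ A) = star (wn v n) :=
      inr_snd_of_fst_eq_zero hfst
    rw [Unitization.inr_mul, Unitization.inr_mul, Unitization.inr_star, hinr, star_star, inr_Tn]
  have h := norm_sub_tendsto (phi_spec v hz)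
  have heq : (fun n => ‖Tn v n z - phi v z‖)
      = fun n => ‖star ((star (wn v n)).snd) * z * ((star (wn v n)).snd) - phi v z‖ := by
    funext n
    rw [hweq n]
  rw [heq] at h
  exact h

lemma cuntz_aux2 {z : A} (hz : z ∈ her (star v * v)) : CuntzLE z (phi v z) := by
  refine ⟨fun n => (Rn (star v) n * (v : Unitization ℂ A)).snd, ?_⟩
  have hmem : phi v z ∈ her (star (star v) * star v) := by
    rw [star_star]
    exact phi_mem v hz
  have hweq : ∀ n, star ((Rn (star v) n * (v : Unitization ℂ A)).snd) * phi v z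
      * ((Rn (star v) n * (v : Unitization ℂ A)).snd) = Tn (star v) n (phi v z) := by
    intro n
    apply Unitization.inr_injective (R := ℂ)
    have hfst : (Rn (star v) n * (v : Unitization ℂ A)).fst = 0 := by
      simp [Unitization.fst_mul]
    have hinr := inr_snd_of_fst_eq_zero hfst
    rw [Unitization.inr_mul, Unitization.inr_mul, Unitization.inr_star, hinr, inr_Tn,
      star_wn, wn]
    simp only [star_mul, Unitization.inr_star, star_star,
      (Rn_selfAdjoint (star v) n).star_eq]
  have h := norm_sub_tendsto (phi_spec (star v) hmem)
  rw [psi_phi v hz] at h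
  have heq : (fun n => ‖Tn (star v) n (phi v z) - z‖)
      = fun n => ‖star ((Rn (star v) n * (v : Unitization ℂ A)).snd) * phi v z
          * ((Rn (star v) n * (v : Unitization ℂ A)).snd) - z‖ := by
    funext n
    rw [hweq n]
  rw [heq] at h
  exact h

end

end Stmt14


theorem stmt_14 (v : A) :
    ∃ φ : A → A,
      Set.BijOn φ (her (star v * v)) (her (v * star v)) ∧
      (∀ x ∈ her (star v * v), ∀ y ∈ her (star v * v), φ (x + y) = φ x + φ y) ∧
      (∀ (c : ℂ), ∀ x ∈ her (star v * v), φ (c • x) = c • φ x) ∧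
      (∀ x ∈ her (star v * v), ∀ y ∈ her (star v * v), φ (x * y) = φ x * φ y) ∧
      (∀ x ∈ her (star v * v), φ (star x) = star (φ x)) ∧
      (∀ z ∈ her (star v * v), 0 ≤ z → CuntzEquiv z (φ z)) := by
  refine ⟨Stmt14.phi v, ⟨fun x hx => Stmt14.phi_mem v hx, ?_, ?_⟩,
    fun x hx y hy => Stmt14.phi_add v hx hy,
    fun c x hx => Stmt14.phi_smul v c hx,
    fun x hx y hy => Stmt14.phi_mul v hx hy,
    fun x hx => Stmt14.phi_star v hx,
    fun z hz _ => ⟨Stmt14.cuntz_aux2 v hz, Stmt14.cuntz_aux1 v hz⟩⟩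
  · intro x hx y hy hxy
    have h1 := Stmt14.psi_phi v hx
    have h2 := Stmt14.psi_phi v hy
    rw [← h1, ← h2, hxy]
  · intro w hw
    have hw' : w ∈ her (star (star v) * star v) := by rwa [star_star]
    have hmem : Stmt14.phi (star v) w ∈ her (star v * v) := by
      have := Stmt14.phi_mem (star v) hw'
      rwa [star_star] at this
    refine ⟨Stmt14.phi (star v) w, hmem, ?_⟩
    have := Stmt14.psi_phi (star v) hw'
    rwa [star_star] at this
end

section
/- (Kirchberg ε-test) Let ω be a free ultrafilter on ℕ. Let X₁, X₂, … be a sequence of non-empty sets, and for each k, n ∈ ℕ let f_n^(k) : X_n → [0, ∞) be a function. For s = (s_n) ∈ Π_{n=1}^∞ X_n define f_ω^(k)(s) := lim_{n → ω} f_n^(k)(s_n), the limit of the sequence (f_n^(k)(s_n)) along ω in the extended interval [0, ∞]. Suppose that for every m ∈ ℕ and every ε > 0 there exists s = (s_n) ∈ Π_{n=1}^∞ X_n with f_ω^(k)(s) < ε for k = 1, …, m. Then there exists t = (t_n) ∈ Π_{n=1}^∞ X_n such that f_ω^(k)(t) = 0 for all k ∈ ℕ. -/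
open Filter Topology

/-- The limit of a `[0, ∞)`-valued sequence along an ultrafilter `ω`, taken in the
compact space `[0, ∞]` (equivalently, the limsup of the sequence along `ω`). -/
noncomputable def ulim (ω : Ultrafilter ℕ) (g : ℕ → ENNReal) : ENNReal :=
  Filter.limsup g (ω : Filter ℕ)

/-- Kirchberg's ε-test: given a sequence of nonempty sets `Xₙ` and, for each `k`, functions
`fₙ⁽ᵏ⁾ : Xₙ → [0,∞)`, if for every `m` and `ε > 0` there is `s ∈ Π Xₙ` with
`limᵤ fₙ⁽ᵏ⁾(sₙ) < ε` for the first `m` functions, then there is `t ∈ Π Xₙ` with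
`limᵤ fₙ⁽ᵏ⁾(tₙ) = 0` for all `k`. -/
theorem stmt_15 (ω : Ultrafilter ℕ) (hω : ∀ n : ℕ, ω ≠ (pure n : Ultrafilter ℕ))
    (X : ℕ → Type*) (hX : ∀ n, Nonempty (X n))
    (f : ℕ → (n : ℕ) → X n → NNReal)
    (h : ∀ m : ℕ, ∀ ε : NNReal, 0 < ε → ∃ s : (n : ℕ) → X n,
      ∀ k : ℕ, k ≤ m →
        ulim ω (fun n => (f k n (s n) : ENNReal)) < (ε : ENNReal)) :
    ∃ t : (n : ℕ) → X n,
      ∀ k : ℕ, ulim ω (fun n => (f k n (t n) : ENNReal)) = 0 := by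
  classical
  have hcof : (ω : Filter ℕ) ≤ atTop := by
    rw [← Nat.cofinite_eq_atTop]
    rcases ω.le_cofinite_or_eq_pure with h' | ⟨a, ha⟩
    · exact h'
    · exact absurd ha (hω a)
  have hε : ∀ m : ℕ, (0 : NNReal) < (2⁻¹) ^ m := fun m => pow_pos (by norm_num) m
  choose s hs using fun m => h m ((2⁻¹) ^ m) (hε m)
  set ε : ℕ → ENNReal := fun m => (((2⁻¹ : NNReal) ^ m : NNReal) : ENNReal) with hεdef
  -- the good sets
  set C : ℕ → Set ℕ := fun m => {n | ∀ k ≤ m, ((f k n (s m n) : ENNReal)) < ε m} with hC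
  have hCmem : ∀ m, C m ∈ ω := by
    intro m
    have : ∀ k ∈ Set.Iic m, ∀ᶠ n in (ω : Filter ℕ),
        ((f k n (s m n) : ENNReal)) < ε m := by
      intro k hk
      exact eventually_lt_of_limsup_lt (hs m k hk)
    have := (eventually_all_finite (Set.finite_Iic m)).2 this
    exact this
  set A : ℕ → Set ℕ := fun m => {n | (∀ j ≤ m, n ∈ C j) ∧ m ≤ n} with hA
  have hAmem : ∀ m, A m ∈ ω := by
    intro m
    have h1 : {n | ∀ j ≤ m, n ∈ C j} ∈ ω :=
      (eventually_all_finite (Set.finite_Iic m)).2 fun j _ => hCmem j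
    have h2 : {n | m ≤ n} ∈ ω := hcof (Ici_mem_atTop m)
    exact inter_mem h1 h2
  -- the diagonal selection
  set M : ℕ → ℕ := fun n => Nat.findGreatest (fun m => n ∈ A m) n with hM
  refine ⟨fun n => s (M n) n, fun k => ?_⟩
  -- show ulim ≤ ε m for all m ≥ max k 1
  have key : ∀ m, k ≤ m → 1 ≤ m →
      ulim ω (fun n => (f k n (s (M n) n) : ENNReal)) ≤ ε m := by
    intro m hkm h1m
    have hsub : ∀ n ∈ A m, (f k n (s (M n) n) : ENNReal) ≤ ε m := by
      intro n hn
      have hmn : m ≤ n := hn.2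
      have hmM : m ≤ M n := Nat.le_findGreatest hmn hn
      have hnA : n ∈ A (M n) := Nat.findGreatest_spec (P := fun m' => n ∈ A m') hmn hn
      have : (f k n (s (M n) n) : ENNReal) < ε (M n) := by
        have := hnA.1 (M n) le_rfl
        exact this k (le_trans hkm hmM)
      refine le_trans this.le ?_
      -- ε (M n) ≤ ε m since m ≤ M n
      simp only [hεdef]
      rw [ENNReal.coe_pow, ENNReal.coe_pow]
      exact pow_le_pow_right_of_le_one' (by norm_num) hmM
    have hev : ∀ᶠ n in (ω : Filter ℕ), (f k n (s (M n) n) : ENNReal) ≤ ε m :=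
      Filter.mem_of_superset (hAmem m) hsub
    exact limsup_le_of_le (by isBoundedDefault) hev
  -- conclude
  have htend : Tendsto ε atTop (𝓝 0) := by
    have : ε = fun m => (2⁻¹ : ENNReal) ^ m := by
      funext m; simp [hεdef, ENNReal.coe_pow, ENNReal.inv_pow]
    rw [this]
    exact ENNReal.tendsto_pow_atTop_nhds_zero_of_lt_one (by norm_num)
  have hle : ulim ω (fun n => (f k n (s (M n) n) : ENNReal)) ≤ 0 := by
    refine ge_of_tendsto htend ?_
    filter_upwards [eventually_ge_atTop (max k 1)] with m hm
    exact key m (le_trans (le_max_left _ _) hm) (le_trans (le_max_right _ _) hm)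
  exact le_antisymm hle zero_le
end

section
/- Let A be a C*-algebra, let h ∈ A be a positive element with ‖h‖ ≤ 1, let σ > 0, let M ≥ 0, and let y ∈ A with ‖y‖ ≤ M. Then ‖h^{1/2} y h^{1/2} − ((h − σ)₊)^{1/2} y ((h − σ)₊)^{1/2}‖ ≤ 2 √σ · M. -/
open Filter Topology

variable {A : Type*} [NonUnitalCStarAlgebra A] [PartialOrder A] [StarOrderedRing A]

/-- The positive square root of a positive element. -/
noncomputable def sqrtA (a : A) : A := CFC.sqrt a

lemma sqrtA_eq_cfcn (a : A) (ha : 0 ≤ a) : sqrtA a = cfcₙ Real.sqrt a := by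
  rw [sqrtA, CFC.sqrt, cfcₙ_nnreal_eq_real _ a ha]
  exact cfcₙ_congr fun x _ => by rw [Real.sqrt]

lemma key_pointwise (x σ : ℝ) (hσ : 0 < σ) :
    |Real.sqrt x - Real.sqrt (max (x - σ) 0)| ≤ Real.sqrt σ := by
  rcases le_or_gt x σ with hx | hx
  · rw [max_eq_right (by linarith), Real.sqrt_zero, sub_zero, abs_of_nonneg (Real.sqrt_nonneg _)]
    exact Real.sqrt_le_sqrt hx
  · rw [max_eq_left (by linarith)]
    have h1 : Real.sqrt x ≤ Real.sqrt (x - σ) + Real.sqrt σ := by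
      nlinarith [Real.sq_sqrt (by linarith : (0:ℝ) ≤ x - σ), Real.sq_sqrt hσ.le,
        Real.sqrt_nonneg (x - σ), Real.sqrt_nonneg σ, Real.sqrt_nonneg x,
        Real.sq_sqrt (by linarith : (0:ℝ) ≤ x)]
    have h2 : Real.sqrt (x - σ) ≤ Real.sqrt x := Real.sqrt_le_sqrt (by linarith)
    rw [abs_of_nonneg (by linarith)]
    linarith

lemma norm_sqrtA_le_one (a : A) (ha : 0 ≤ a) (ha1 : ‖a‖ ≤ 1) : ‖sqrtA a‖ ≤ 1 := by
  have hs : 0 ≤ sqrtA a := CFC.sqrt_nonneg a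
  have hsa : star (sqrtA a) = sqrtA a := (IsSelfAdjoint.of_nonneg hs).star_eq
  have := CStarRing.norm_star_mul_self (x := sqrtA a)
  rw [hsa] at this
  rw [show sqrtA a * sqrtA a = a from CFC.sqrt_mul_sqrt_self a ha] at this
  nlinarith [norm_nonneg (sqrtA a)]

theorem stmt_17 (h : A) (hh : 0 ≤ h) (hh1 : ‖h‖ ≤ 1) (σ : ℝ) (hσ : 0 < σ)
    (M : ℝ) (hM : 0 ≤ M) (y : A) (hy : ‖y‖ ≤ M) :
    ‖sqrtA h * y * sqrtA h - sqrtA (cut h σ) * y * sqrtA (cut h σ)‖ ≤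
      2 * Real.sqrt σ * M := by
  set s := sqrtA h with hs_def
  set t := sqrtA (cut h σ) with ht_def
  have hcut_nonneg : 0 ≤ cut h σ :=
    cfcₙ_nonneg fun x _ => le_max_right _ _
  have hcut_le : cut h σ ≤ h := by
    rw [cut]
    conv_rhs => rw [← cfcₙ_id ℝ h]
    exact cfcₙ_mono (fun x hx => by
        have hx0 : 0 ≤ x := quasispectrum_nonneg_of_nonneg h hh x hx
        simpa only [id_eq] using max_le (by linarith) hx0)
      (by fun_prop) (by fun_prop) (by simp [hσ.le]) (by simp)
  have hcut1 : ‖cut h σ‖ ≤ 1 :=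
    (CStarAlgebra.norm_le_norm_of_nonneg_of_le hcut_nonneg hcut_le).trans hh1
  have hs1 : ‖s‖ ≤ 1 := norm_sqrtA_le_one h hh hh1
  have ht1 : ‖t‖ ≤ 1 := norm_sqrtA_le_one _ hcut_nonneg hcut1
  -- the norm bound on s - t
  have hst : ‖s - t‖ ≤ Real.sqrt σ := by
    have hcomp : t = cfcₙ (Real.sqrt ∘ fun x : ℝ => max (x - σ) 0) h := by
      rw [ht_def, sqrtA_eq_cfcn _ hcut_nonneg, cut, cfcₙ_comp Real.sqrt _ h
        Real.continuous_sqrt.continuousOn Real.sqrt_zero (by fun_prop)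
        (by simp [hσ.le]) hh.isSelfAdjoint]
    have hsub : s - t = cfcₙ (fun x : ℝ => Real.sqrt x - Real.sqrt (max (x - σ) 0)) h := by
      rw [hs_def, sqrtA_eq_cfcn _ hh, hcomp, ← cfcₙ_sub _ _ h Real.continuous_sqrt.continuousOn
        Real.sqrt_zero (by fun_prop) (by simp [hσ.le])]
      rfl
    rw [hsub]
    exact norm_cfcₙ_le fun x _ => by
      simpa [Real.norm_eq_abs] using key_pointwise x σ hσ
  -- decompose
  have hdecomp : s * y * s - t * y * t = (s - t) * y * s + t * y * (s - t) := by
    noncomm_ring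
  rw [hdecomp]
  have hσ0 := Real.sqrt_nonneg σ
  calc ‖(s - t) * y * s + t * y * (s - t)‖
      ≤ ‖(s - t) * y * s‖ + ‖t * y * (s - t)‖ := norm_add_le _ _
    _ ≤ ‖s - t‖ * ‖y‖ * ‖s‖ + ‖t‖ * ‖y‖ * ‖s - t‖ := by
        gcongr <;> exact (norm_mul_le _ _).trans (by gcongr; exact norm_mul_le _ _)
    _ ≤ Real.sqrt σ * M * 1 + 1 * M * Real.sqrt σ := by
        have h0 : (0:ℝ) ≤ ‖y‖ := norm_nonneg _
        gcongr
    _ = 2 * Real.sqrt σ * M := by ring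
end
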